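/- arXiv:2203.07318 — 13 statements merged into one kernel-verified Lean document; each statement's English description precedes it below -/
import Mathlib

section
/- Let L > 0 and x ∈ ℝ^n, and suppose the descent condition holds at x with constant L, i.e. f(T_L(x)) ≤ f(x) + ⟨∇f(x), T_L(x) − x⟩ + (L/2)‖T_L(x) − x‖². Then for every y ∈ ℝ^n the composite objective is globally lower bounded as F(y) ≥ F(T_L(x)) + (1/(2L))‖g_L(x)‖² + ⟨g_L(x), y − x⟩, where g_L(x) = L(x − T_L(x)) is the composite gradient mapping. -/
/-!
`T` minimizes the quadratic model of `f` at `x` plus `Ψ`, so the first-order optimality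
condition makes `L (x - T) - ∇f(x)` a subgradient of `Ψ` at `T`. Adding the tangent-line
inequality of `f` at `x` and the descent condition at `T`, the bound follows by expanding
`y - T = (y - x) + (x - T)`.
-/

open Set
open scoped RealInnerProductSpace

abbrev Euc (n : ℕ) := EuclideanSpace ℝ (Fin n)

section

variable {E : Type*} [NormedAddCommGroup E] [InnerProductSpace ℝ E]

lemma ConvexOn.le_add_smul_sub {s : Set E} {Ψ : E → ℝ} (hΨ : ConvexOn ℝ s Ψ) {x y : E}
    (hx : x ∈ s) (hy : y ∈ s) {t : ℝ} (ht₀ : 0 ≤ t) (ht₁ : t ≤ 1) :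
    Ψ (x + t • (y - x)) ≤ Ψ x + t * (Ψ y - Ψ x) := by
  have h := hΨ.2 hx hy (sub_nonneg.2 ht₁) ht₀ (sub_add_cancel 1 t)
  rw [smul_eq_mul, smul_eq_mul] at h
  rw [show x + t • (y - x) = (1 - t) • x + t • y by module]
  linarith

lemma ConvexOn.sub_le_of_isMinOn_add {s : Set E} {h Ψ : E → ℝ} (hΨ : ConvexOn ℝ s Ψ)
    {T y : E} (hT : T ∈ s) (hy : y ∈ s) (hmin : IsMinOn (h + Ψ) s T) {a : ℝ}
    (hd : HasLineDerivAt ℝ h a T (y - T)) : Ψ T - a ≤ Ψ y := by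
  suffices ∀ t ∈ Ioc (0 : ℝ) 1, Ψ T - Ψ y ≤ t⁻¹ • (h (T + t • (y - T)) - h T) by
    have := ge_of_tendsto hd.tendsto_slope_zero_right
      (Filter.mem_of_superset (Ioc_mem_nhdsGT one_pos) this)
    linarith
  rintro t ⟨ht₀, ht₁⟩
  have hz : T + t • (y - T) ∈ s := hΨ.1.add_smul_sub_mem hT hy ⟨ht₀.le, ht₁⟩
  have hmin_z : h T + Ψ T ≤ h (T + t • (y - T)) + Ψ (T + t • (y - T)) := hmin hz
  have hconv := hΨ.le_add_smul_sub hT hy ht₀.le ht₁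
  rw [smul_eq_mul, le_inv_mul_iff₀ ht₀]
  nlinarith

lemma ConvexOn.add_le_of_hasLineDerivAt {s : Set E} {f : E → ℝ} (hf : ConvexOn ℝ s f)
    {x y : E} (hx : x ∈ s) (hy : y ∈ s) {a : ℝ} (hd : HasLineDerivAt ℝ f a x (y - x)) :
    f x + a ≤ f y := by
  -- `-f + f = 0` is minimized everywhere, and the optimality condition for `(-f, f)` is the claim.
  have hmin : IsMinOn (-f + f) s x := isMinOn_iff.2 fun z _ => by simp
  have := hf.sub_le_of_isMinOn_add hx hy hmin (HasDerivAt.neg hd)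
  linarith

lemma hasLineDerivAt_add_inner_add_norm_sq (b c : ℝ) (g x T v : E) :
    HasLineDerivAt ℝ (fun z => b + ⟪g, z - x⟫ + c / 2 * ‖z - x‖ ^ 2)
      (⟪g, v⟫ + c * ⟪T - x, v⟫) T v := by
  have hsub := (hasFDerivAt_id (𝕜 := ℝ) T).sub_const x
  have hd := (((hasFDerivAt_const g T).inner ℝ hsub).const_add b).add
    (hsub.norm_sq.const_mul (c / 2))
  convert hd.hasLineDerivAt v using 1
  · rfl
  · simp [inner_sub_left]
    ring

lemma HasGradientAt.hasLineDerivAt [CompleteSpace E] {f : E → ℝ} {g x : E}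
    (hf : HasGradientAt f g x) (v : E) : HasLineDerivAt ℝ f ⟪g, v⟫ x v := by
  simpa using (hasGradientAt_iff_hasFDerivAt.1 hf).hasLineDerivAt v

end

theorem composite_gradient_lower_bound_general {n : ℕ}
    (f Ψ F : Euc n → ℝ) (f' : Euc n → Euc n)
    (hf : ConvexOn ℝ Set.univ f)
    (hf' : ∀ z, HasGradientAt f (f' z) z)
    (hΨ : ConvexOn ℝ Set.univ Ψ)
    (hF : ∀ z, F z = f z + Ψ z)
    (L : ℝ) (hL : 0 < L) (x T : Euc n)
    (hT : ∀ y, f x + ⟪f' x, T - x⟫ + L / 2 * ‖T - x‖ ^ 2 + Ψ T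
        ≤ f x + ⟪f' x, y - x⟫ + L / 2 * ‖y - x‖ ^ 2 + Ψ y)
    (hdesc : f T ≤ f x + ⟪f' x, T - x⟫ + L / 2 * ‖T - x‖ ^ 2) :
    ∀ y, F y ≥ F T + 1 / (2 * L) * ‖L • (x - T)‖ ^ 2 + ⟪L • (x - T), y - x⟫ := by
  intro y
  have hf_tangent : f x + ⟪f' x, y - x⟫ ≤ f y :=
    hf.add_le_of_hasLineDerivAt (mem_univ x) (mem_univ y) ((hf' x).hasLineDerivAt (y - x))
  have hΨ_optimal : Ψ T - (⟪f' x, y - T⟫ + L * ⟪T - x, y - T⟫) ≤ Ψ y :=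
    hΨ.sub_le_of_isMinOn_add (h := fun z => f x + ⟪f' x, z - x⟫ + L / 2 * ‖z - x‖ ^ 2)
      (mem_univ T) (mem_univ y) (isMinOn_univ_iff.2 hT)
      (hasLineDerivAt_add_inner_add_norm_sq _ _ _ _ _ _)
  have hinner : ⟪f' x, y - T⟫ + L * ⟪T - x, y - T⟫ = ⟪f' x, y - x⟫ - ⟪f' x, T - x⟫
      - ⟪L • (x - T), y - x⟫ - L * ‖T - x‖ ^ 2 := by
    rw [show y - T = (y - x) - (T - x) by abel, show x - T = -(T - x) by abel]
    generalize T - x = u, y - x = w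
    simp only [inner_sub_right, real_inner_smul_left, inner_neg_left, real_inner_self_eq_norm_sq]
    ring
  have hnorm : 1 / (2 * L) * ‖L • (x - T)‖ ^ 2 = L / 2 * ‖T - x‖ ^ 2 := by
    rw [norm_smul, Real.norm_of_nonneg hL.le, norm_sub_rev]
    field_simp
  rw [hF, hF, hnorm]
  linarith

/-- Lemma 1: if the descent condition holds at `x` with constant `L > 0`,
then the composite objective `F = f + Ψ` is globally lower bounded by
`F(T_L(x)) + (1/(2L))‖g_L(x)‖² + ⟨g_L(x), y − x⟩` where `g_L(x) = L (x − T_L(x))`. -/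
theorem composite_gradient_lower_bound {n : ℕ}
    (f Ψ F : Euc n → ℝ) (f' : Euc n → Euc n)
    (hf : ConvexOn ℝ Set.univ f)
    (hf' : ∀ z, HasGradientAt f (f' z) z)
    (hΨ : ConvexOn ℝ Set.univ Ψ)
    (hΨlsc : LowerSemicontinuous Ψ)
    (hF : ∀ z, F z = f z + Ψ z)
    (L : ℝ) (hL : 0 < L) (x T : Euc n)
    (hT : ∀ y, f x + ⟪f' x, T - x⟫ + L / 2 * ‖T - x‖ ^ 2 + Ψ T
        ≤ f x + ⟪f' x, y - x⟫ + L / 2 * ‖y - x‖ ^ 2 + Ψ y)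
    (hdesc : f T ≤ f x + ⟪f' x, T - x⟫ + L / 2 * ‖T - x‖ ^ 2) :
    ∀ y, F y ≥ F T + 1 / (2 * L) * ‖L • (x - T)‖ ^ 2 + ⟪L • (x - T), y - x⟫ :=
  composite_gradient_lower_bound_general f Ψ F f' hf hf' hΨ hF L hL x T hT hdesc
end

section
/- Let H ∈ ℝ^p and let G be an n×p real matrix with columns g_1, …, g_p such that the piecewise-linear model is a global lower bound on F: for every i and every y ∈ ℝ^n, (H)_i + ⟨g_i, y⟩ ≤ F(y). Let λ̄ ∈ Δ_p, a > 0, x̄ ∈ ℝ^n, and set x₊ = x̄ − a G λ̄. If F(x₊) ≤ ⟨λ̄, H⟩ + ⟨G λ̄, x̄⟩ − (a/2)‖G λ̄‖², then for every y ∈ ℝ^n: (1/2)‖x₊ − y‖² ≤ (1/2)‖x̄ − y‖² + a (F(y) − F(x₊)). -/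
open Set
open scoped RealInnerProductSpace

/-- successful-step case of Theorem 2: if the piecewise-linear model
`(H, G)` is a global lower bound on the composite objective `F = f + Ψ`, `λ̄ ∈ Δ_p`, `a > 0`,
`x₊ = x̄ − a G λ̄`, and `F(x₊) ≤ ⟨λ̄, H⟩ + ⟨G λ̄, x̄⟩ − (a/2)‖G λ̄‖²`, then for every `y`:
`(1/2)‖x₊ − y‖² ≤ (1/2)‖x̄ − y‖² + a (F(y) − F(x₊))`. -/
theorem gmm_successful_step {n p : ℕ}
    (f Ψ F : Euc n → ℝ)
    (hf : ConvexOn ℝ Set.univ f) (hfd : Differentiable ℝ f)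
    (hΨ : ConvexOn ℝ Set.univ Ψ) (hΨlsc : LowerSemicontinuous Ψ)
    (hF : ∀ z, F z = f z + Ψ z)
    (H : Fin p → ℝ) (g : Fin p → Euc n)
    (hlow : ∀ (i : Fin p) (y : Euc n), H i + ⟪g i, y⟫ ≤ F y)
    (lam : Fin p → ℝ) (hlam : lam ∈ stdSimplex ℝ (Fin p))
    (a : ℝ) (ha : 0 < a) (xbar : Euc n)
    (hstep : F (xbar - a • ∑ i, lam i • g i)
        ≤ (∑ i, lam i * H i) + ⟪∑ i, lam i • g i, xbar⟫ - a / 2 * ‖∑ i, lam i • g i‖ ^ 2) :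
    ∀ y, 1 / 2 * ‖(xbar - a • ∑ i, lam i • g i) - y‖ ^ 2
        ≤ 1 / 2 * ‖xbar - y‖ ^ 2 + a * (F y - F (xbar - a • ∑ i, lam i • g i)) := by
  intro y
  set G : Euc n := ∑ i, lam i • g i with hG
  -- lower bound: ∑ λ_i H_i + ⟪G, y⟫ ≤ F y
  have hlb : (∑ i, lam i * H i) + ⟪G, y⟫ ≤ F y := by
    have h1 : ⟪G, y⟫ = ∑ i, lam i * ⟪g i, y⟫ := by
      rw [hG, sum_inner]
      exact Finset.sum_congr rfl fun i _ => real_inner_smul_left _ _ _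
    have h2 : ∑ i, lam i * (H i + ⟪g i, y⟫) ≤ ∑ i, lam i * F y := by
      apply Finset.sum_le_sum
      intro i _
      exact mul_le_mul_of_nonneg_left (hlow i y) (hlam.1 i)
    have h3 : ∑ i, lam i * F y = F y := by
      rw [← Finset.sum_mul, hlam.2, one_mul]
    calc (∑ i, lam i * H i) + ⟪G, y⟫ = ∑ i, lam i * (H i + ⟪g i, y⟫) := by
          rw [h1, ← Finset.sum_add_distrib]
          exact Finset.sum_congr rfl fun i _ => by ring
      _ ≤ F y := h3 ▸ h2
  -- norm expansion
  have hexp : ‖(xbar - a • G) - y‖ ^ 2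
      = ‖xbar - y‖ ^ 2 - 2 * (a * ⟪G, xbar - y⟫) + a ^ 2 * ‖G‖ ^ 2 := by
    have : (xbar - a • G) - y = (xbar - y) - a • G := by abel
    rw [this, @norm_sub_sq_real, real_inner_smul_right, norm_smul]
    simp only [real_inner_smul_right, abs_of_pos ha, Real.norm_eq_abs, mul_pow]
    have : ⟪xbar - y, G⟫ = ⟪G, xbar - y⟫ := real_inner_comm _ _
    rw [this]
  have hkey : a * ⟪G, y⟫ - a * ⟪G, xbar⟫ + a * (a / 2 * ‖G‖ ^ 2)
      ≤ a * (F y - F (xbar - a • G)) := by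
    have := hstep
    nlinarith [hlb, this, ha.le]
  have hinner : ⟪G, xbar - y⟫ = ⟪G, xbar⟫ - ⟪G, y⟫ := inner_sub_right _ _ _
  nlinarith [hexp, hkey, hinner]
end

section
/- Let (x_k)_{k≥0} be a sequence in ℝ^n and (a_k)_{k≥1} positive reals such that for every k ≥ 0 and every y ∈ ℝ^n: (1/2)‖x_{k+1} − y‖² ≤ (1/2)‖x_k − y‖² + a_{k+1}(F(y) − F(x_{k+1})). Then for every minimizer x* of F and every k ≥ 1: F(x_k) − F(x*) ≤ ‖x₀ − x*‖² / (2 Σ_{i=1}^{k} a_i). Moreover, if in addition a_i ≥ 1/L_u for all i ≥ 1 and some L_u > 0, then F(x_k) − F(x*) ≤ L_u ‖x₀ − x*‖² / (2k). -/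
open Set
open scoped RealInnerProductSpace

/-- Theorem 3: under the per-iteration inequality
`(1/2)‖x_{k+1} − y‖² ≤ (1/2)‖x_k − y‖² + a_{k+1}(F(y) − F(x_{k+1}))`, for every minimizer `x*`
of `F` and every `k ≥ 1`, `F(x_k) − F(x*) ≤ ‖x₀ − x*‖²/(2 Σ_{i=1}^k a_i)`; moreover, if
`a_i ≥ 1/L_u` for all `i ≥ 1`, then `F(x_k) − F(x*) ≤ L_u ‖x₀ − x*‖²/(2k)`. -/
theorem gmm_convergence_rate {n : ℕ}
    (f Ψ F : Euc n → ℝ)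
    (hf : ConvexOn ℝ Set.univ f) (hfd : Differentiable ℝ f)
    (hΨ : ConvexOn ℝ Set.univ Ψ) (hΨlsc : LowerSemicontinuous Ψ)
    (hF : ∀ z, F z = f z + Ψ z)
    (x : ℕ → Euc n) (a : ℕ → ℝ) (ha : ∀ k, 1 ≤ k → 0 < a k)
    (hiter : ∀ (k : ℕ) (y : Euc n),
      1 / 2 * ‖x (k + 1) - y‖ ^ 2 ≤ 1 / 2 * ‖x k - y‖ ^ 2 + a (k + 1) * (F y - F (x (k + 1)))) :
    ∀ xstar : Euc n, (∀ y, F xstar ≤ F y) → ∀ k : ℕ, 1 ≤ k →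
      (F (x k) - F xstar ≤ ‖x 0 - xstar‖ ^ 2 / (2 * ∑ i ∈ Finset.Icc 1 k, a i))
      ∧ ∀ L_u : ℝ, 0 < L_u → (∀ i, 1 ≤ i → 1 / L_u ≤ a i) →
          F (x k) - F xstar ≤ L_u * ‖x 0 - xstar‖ ^ 2 / (2 * k) := by
  intro xstar hmin k hk
  -- monotonicity
  have hmono : ∀ m : ℕ, F (x (m + 1)) ≤ F (x m) := by
    intro m
    have h := hiter m (x m)
    have h0 : (0:ℝ) ≤ 1 / 2 * ‖x (m + 1) - x m‖ ^ 2 := by positivity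
    have hsq : ‖x m - x m‖ = 0 := by simp
    rw [hsq] at h
    have ha' := ha (m + 1) (by omega)
    nlinarith
  have hmono' : ∀ i j : ℕ, i ≤ j → F (x j) ≤ F (x i) := by
    intro i j hij
    induction j with
    | zero => have : i = 0 := by omega
              simp [this]
    | succ m ih =>
      rcases Nat.eq_or_lt_of_le hij with h | h
      · rw [h]
      · exact le_trans (hmono m) (ih (by omega))
  -- telescoping
  have htel : ∀ m : ℕ, (∑ i ∈ Finset.Icc 1 m, a i * (F (x i) - F xstar))
      + 1 / 2 * ‖x m - xstar‖ ^ 2 ≤ 1 / 2 * ‖x 0 - xstar‖ ^ 2 := by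
    intro m
    induction m with
    | zero => simp
    | succ m ih =>
      have h := hiter m xstar
      rw [Finset.sum_Icc_succ_top (by omega : 1 ≤ m + 1)]
      nlinarith [h, ih]
  have hSpos : 0 < ∑ i ∈ Finset.Icc 1 k, a i :=
    Finset.sum_pos (fun i hi => ha i (Finset.mem_Icc.mp hi).1)
      ⟨1, Finset.mem_Icc.mpr ⟨le_refl 1, hk⟩⟩
  have hkey : (∑ i ∈ Finset.Icc 1 k, a i) * (F (x k) - F xstar) ≤ 1 / 2 * ‖x 0 - xstar‖ ^ 2 := by
    have hb : (∑ i ∈ Finset.Icc 1 k, a i) * (F (x k) - F xstar)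
        ≤ ∑ i ∈ Finset.Icc 1 k, a i * (F (x i) - F xstar) := by
      rw [Finset.sum_mul]
      apply Finset.sum_le_sum
      intro i hi
      obtain ⟨hi1, hi2⟩ := Finset.mem_Icc.mp hi
      have := hmono' i k hi2
      have := ha i hi1
      nlinarith
    have hnn : (0:ℝ) ≤ 1 / 2 * ‖x k - xstar‖ ^ 2 := by positivity
    linarith [htel k]
  have hDnn : 0 ≤ F (x k) - F xstar := by linarith [hmin (x k)]
  have h1 : F (x k) - F xstar ≤ ‖x 0 - xstar‖ ^ 2 / (2 * ∑ i ∈ Finset.Icc 1 k, a i) := by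
    rw [le_div_iff₀ (by positivity)]
    nlinarith
  refine ⟨h1, fun L_u hL haL => ?_⟩
  have hsum_lb : (k : ℝ) / L_u ≤ ∑ i ∈ Finset.Icc 1 k, a i := by
    calc (k : ℝ) / L_u = ∑ i ∈ Finset.Icc 1 k, 1 / L_u := by
          rw [Finset.sum_const, Nat.card_Icc]
          simp [div_eq_mul_inv, one_div]
      _ ≤ ∑ i ∈ Finset.Icc 1 k, a i :=
          Finset.sum_le_sum fun i hi => haL i (Finset.mem_Icc.mp hi).1
  have hkpos : (0:ℝ) < k := by exact_mod_cast hk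
  calc F (x k) - F xstar ≤ ‖x 0 - xstar‖ ^ 2 / (2 * ∑ i ∈ Finset.Icc 1 k, a i) := h1
    _ ≤ L_u * ‖x 0 - xstar‖ ^ 2 / (2 * k) := by
        rw [div_le_div_iff₀ (by positivity) (by positivity)]
        have : (k:ℝ) / L_u * L_u ≤ (∑ i ∈ Finset.Icc 1 k, a i) * L_u :=
          mul_le_mul_of_nonneg_right hsum_lb hL.le
        rw [div_mul_cancel₀] at this
        · nlinarith
        · exact hL.ne'
end

section
/- Suppose F has quadratic functional growth with parameter μ > 0. Let (x_k)_{k≥0} be a sequence in ℝ^n and (a_k)_{k≥1} positive reals such that for every k ≥ 0 and every y ∈ ℝ^n: (1/2)‖x_{k+1} − y‖² ≤ (1/2)‖x_k − y‖² + a_{k+1}(F(y) − F(x_{k+1})). Then for every k ≥ 1: ‖x_k − o(x_k)‖² ≤ (Π_{i=1}^{k} 1/(1 + a_i μ)) ‖x₀ − o(x₀)‖². Moreover, if in addition a_i ≥ 1/L_u for all i ≥ 1 and some L_u > 0, then ‖x_k − o(x_k)‖² ≤ (1 + μ/L_u)^{−k} ‖x₀ − o(x₀)‖². -/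
open Set
open scoped RealInnerProductSpace

/-- under quadratic functional growth with parameter `μ > 0` and the
per-iteration inequality, the squared distances to the optimal set decrease linearly:
`‖x_k − o(x_k)‖² ≤ (Π_{i=1}^k 1/(1 + a_i μ)) ‖x₀ − o(x₀)‖²`, and if in addition
`a_i ≥ 1/L_u`, then `‖x_k − o(x_k)‖² ≤ (1 + μ/L_u)^{−k} ‖x₀ − o(x₀)‖²`. -/
theorem qfg_linear_rate_iterates {n : ℕ}
    (f Ψ F : Euc n → ℝ)
    (hf : ConvexOn ℝ Set.univ f) (hfd : Differentiable ℝ f)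
    (hΨ : ConvexOn ℝ Set.univ Ψ) (hΨlsc : LowerSemicontinuous Ψ)
    (hF : ∀ z, F z = f z + Ψ z)
    (Fstar : ℝ) (Xstar : Set (Euc n))
    (hXstar : Xstar = {z | ∀ y, F z ≤ F y}) (hXne : Xstar.Nonempty)
    (hFstar : ∀ z ∈ Xstar, F z = Fstar)
    (o : Euc n → Euc n)
    (ho : ∀ z, o z ∈ Xstar ∧ ∀ w ∈ Xstar, ‖z - o z‖ ≤ ‖z - w‖)
    (μ : ℝ) (hμ : 0 < μ)
    (hQFG : ∀ z, Fstar + μ / 2 * ‖z - o z‖ ^ 2 ≤ F z)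
    (x : ℕ → Euc n) (a : ℕ → ℝ) (ha : ∀ k, 1 ≤ k → 0 < a k)
    (hiter : ∀ (k : ℕ) (y : Euc n),
      1 / 2 * ‖x (k + 1) - y‖ ^ 2 ≤ 1 / 2 * ‖x k - y‖ ^ 2 + a (k + 1) * (F y - F (x (k + 1)))) :
    ∀ k : ℕ, 1 ≤ k →
      (‖x k - o (x k)‖ ^ 2 ≤ (∏ i ∈ Finset.Icc 1 k, (1 + a i * μ)⁻¹) * ‖x 0 - o (x 0)‖ ^ 2)
      ∧ ∀ L_u : ℝ, 0 < L_u → (∀ i, 1 ≤ i → 1 / L_u ≤ a i) →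
          ‖x k - o (x k)‖ ^ 2 ≤ ((1 + μ / L_u) ^ k)⁻¹ * ‖x 0 - o (x 0)‖ ^ 2 := by

  -- key one-step contraction
  have key : ∀ k : ℕ, ‖x (k+1) - o (x (k+1))‖ ^ 2 ≤ (1 + a (k+1) * μ)⁻¹ * ‖x k - o (x k)‖ ^ 2 := by
    intro k
    have hak : 0 < a (k+1) := ha (k+1) (Nat.le_add_left 1 k)
    have hpos : 0 < 1 + a (k+1) * μ := by positivity
    have h1 := hiter k (o (x k))
    have hFo : F (o (x k)) = Fstar := hFstar _ (ho (x k)).1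
    have hnear : ‖x (k+1) - o (x (k+1))‖ ≤ ‖x (k+1) - o (x k)‖ :=
      (ho (x (k+1))).2 _ (ho (x k)).1
    have hnear2 : ‖x (k+1) - o (x (k+1))‖ ^ 2 ≤ ‖x (k+1) - o (x k)‖ ^ 2 :=
      pow_le_pow_left₀ (norm_nonneg _) hnear 2
    have hq := hQFG (x (k+1))
    have hstep : (1 + a (k+1) * μ) * ‖x (k+1) - o (x (k+1))‖ ^ 2 ≤ ‖x k - o (x k)‖ ^ 2 := by
      nlinarith [hak.le, hμ.le, norm_nonneg (x (k+1) - o (x (k+1))), sq_nonneg (‖x (k+1) - o (x (k+1))‖)]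
    rw [inv_mul_eq_div, le_div_iff₀ hpos]
    nlinarith [hstep]
  have d0 : (0:ℝ) ≤ ‖x 0 - o (x 0)‖ ^ 2 := sq_nonneg _
  -- product bound for all k
  have prodbd : ∀ k : ℕ,
      ‖x k - o (x k)‖ ^ 2 ≤ (∏ i ∈ Finset.Icc 1 k, (1 + a i * μ)⁻¹) * ‖x 0 - o (x 0)‖ ^ 2 := by
    intro k
    induction k with
    | zero => simp
    | succ m ih =>
      have hak : 0 < a (m+1) := ha (m+1) (Nat.le_add_left 1 m)
      have hpos : (0:ℝ) < (1 + a (m+1) * μ)⁻¹ := by positivity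
      calc ‖x (m+1) - o (x (m+1))‖ ^ 2 ≤ (1 + a (m+1) * μ)⁻¹ * ‖x m - o (x m)‖ ^ 2 := key m
        _ ≤ (1 + a (m+1) * μ)⁻¹ * ((∏ i ∈ Finset.Icc 1 m, (1 + a i * μ)⁻¹) * ‖x 0 - o (x 0)‖ ^ 2) := by
            exact mul_le_mul_of_nonneg_left ih hpos.le
        _ = (∏ i ∈ Finset.Icc 1 (m+1), (1 + a i * μ)⁻¹) * ‖x 0 - o (x 0)‖ ^ 2 := by
            rw [Finset.prod_Icc_succ_top (Nat.le_add_left 1 m)]; ring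
  intro k hk
  refine ⟨prodbd k, ?_⟩
  intro L hL haL
  have h1 : (0:ℝ) < 1 + μ / L := by positivity
  have hprod : (∏ i ∈ Finset.Icc 1 k, (1 + a i * μ)⁻¹) ≤ ((1 + μ / L) ^ k)⁻¹ := by
    have : (∏ i ∈ Finset.Icc 1 k, (1 + a i * μ)⁻¹) ≤ ∏ i ∈ Finset.Icc 1 k, (1 + μ / L)⁻¹ := by
      apply Finset.prod_le_prod
      · intro i hi
        have := ha i (Finset.mem_Icc.mp hi).1
        positivity
      · intro i hi
        have hai := haL i (Finset.mem_Icc.mp hi).1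
        have : 1 + μ / L ≤ 1 + a i * μ := by
          have : μ / L ≤ a i * μ := by
            rw [div_eq_mul_inv, mul_comm (a i) μ]
            exact mul_le_mul_of_nonneg_left (by simpa [one_div] using hai) hμ.le
          linarith
        exact inv_anti₀ h1 this
    calc (∏ i ∈ Finset.Icc 1 k, (1 + a i * μ)⁻¹) ≤ ∏ i ∈ Finset.Icc 1 k, (1 + μ / L)⁻¹ := this
      _ = ((1 + μ / L) ^ k)⁻¹ := by
          rw [Finset.prod_const, Nat.card_Icc]
          simp [inv_pow]
  calc ‖x k - o (x k)‖ ^ 2 ≤ (∏ i ∈ Finset.Icc 1 k, (1 + a i * μ)⁻¹) * ‖x 0 - o (x 0)‖ ^ 2 := prodbd k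
    _ ≤ ((1 + μ / L) ^ k)⁻¹ * ‖x 0 - o (x 0)‖ ^ 2 := mul_le_mul_of_nonneg_right hprod d0
end

section
/- Suppose F has quadratic functional growth with parameter μ > 0. Let (x_k)_{k≥0} be a sequence in ℝ^n and (a_k)_{k≥1} positive reals such that for every k ≥ 0 and every y ∈ ℝ^n: (1/2)‖x_{k+1} − y‖² ≤ (1/2)‖x_k − y‖² + a_{k+1}(F(y) − F(x_{k+1})). Then for every k ≥ 1: F(x_k) − F* ≤ (Π_{i=1}^{k−1} 1/(1 + a_i μ)) ‖x₀ − o(x₀)‖² / (2 a_k). Moreover, if in addition a_i ≥ 1/L_u for all i ≥ 1 and some L_u > 0, then F(x_k) − F* ≤ (1 + μ/L_u)^{1−k} L_u ‖x₀ − o(x₀)‖² / 2. -/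
open Set
open scoped RealInnerProductSpace

/-- under quadratic functional growth with parameter `μ > 0` and the
per-iteration inequality, the objective residuals decrease linearly:
`F(x_k) − F* ≤ (Π_{i=1}^{k−1} 1/(1 + a_i μ)) ‖x₀ − o(x₀)‖²/(2 a_k)`, and if in addition
`a_i ≥ 1/L_u`, then `F(x_k) − F* ≤ (1 + μ/L_u)^{1−k} L_u ‖x₀ − o(x₀)‖²/2`. -/
theorem qfg_linear_rate_values {n : ℕ}
    (f Ψ F : Euc n → ℝ)
    (hf : ConvexOn ℝ Set.univ f) (hfd : Differentiable ℝ f)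
    (hΨ : ConvexOn ℝ Set.univ Ψ) (hΨlsc : LowerSemicontinuous Ψ)
    (hF : ∀ z, F z = f z + Ψ z)
    (Fstar : ℝ) (Xstar : Set (Euc n))
    (hXstar : Xstar = {z | ∀ y, F z ≤ F y}) (hXne : Xstar.Nonempty)
    (hFstar : ∀ z ∈ Xstar, F z = Fstar)
    (o : Euc n → Euc n)
    (ho : ∀ z, o z ∈ Xstar ∧ ∀ w ∈ Xstar, ‖z - o z‖ ≤ ‖z - w‖)
    (μ : ℝ) (hμ : 0 < μ)
    (hQFG : ∀ z, Fstar + μ / 2 * ‖z - o z‖ ^ 2 ≤ F z)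
    (x : ℕ → Euc n) (a : ℕ → ℝ) (ha : ∀ k, 1 ≤ k → 0 < a k)
    (hiter : ∀ (k : ℕ) (y : Euc n),
      1 / 2 * ‖x (k + 1) - y‖ ^ 2 ≤ 1 / 2 * ‖x k - y‖ ^ 2 + a (k + 1) * (F y - F (x (k + 1)))) :
    ∀ k : ℕ, 1 ≤ k →
      (F (x k) - Fstar
        ≤ (∏ i ∈ Finset.Icc 1 (k - 1), (1 + a i * μ)⁻¹) * ‖x 0 - o (x 0)‖ ^ 2 / (2 * a k))
      ∧ ∀ L_u : ℝ, 0 < L_u → (∀ i, 1 ≤ i → 1 / L_u ≤ a i) →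
          F (x k) - Fstar
            ≤ ((1 + μ / L_u) ^ (k - 1))⁻¹ * (L_u * ‖x 0 - o (x 0)‖ ^ 2 / 2) := by
  have hFo : ∀ z, F (o z) = Fstar := fun z => hFstar _ (ho z).1
  set D : ℕ → ℝ := fun k => ‖x k - o (x k)‖ ^ 2 with hD
  have hDnn : ∀ k, 0 ≤ D k := fun k => sq_nonneg _
  have key : ∀ k : ℕ, a (k+1) * (F (x (k+1)) - Fstar) ≤ 1/2 * D k - 1/2 * D (k+1) := by
    intro k
    have h1 := hiter k (o (x k))
    rw [hFo] at h1
    have h2 : ‖x (k+1) - o (x (k+1))‖ ≤ ‖x (k+1) - o (x k)‖ :=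
      (ho (x (k+1))).2 _ (ho (x k)).1
    have h3 : D (k+1) ≤ ‖x (k+1) - o (x k)‖ ^ 2 :=
      pow_le_pow_left₀ (norm_nonneg _) h2 2
    simp only [hD] at *
    nlinarith
  have key2 : ∀ k : ℕ, (1 + a (k+1) * μ) * D (k+1) ≤ D k := by
    intro k
    have h1 := key k
    have h2 := hQFG (x (k+1))
    have h3 := ha (k+1) (by omega)
    simp only [hD] at *
    nlinarith
  have hprod : ∀ k : ℕ, D k ≤ (∏ i ∈ Finset.Icc 1 k, (1 + a i * μ)⁻¹) * D 0 := by
    intro k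
    induction k with
    | zero => simp
    | succ m ih =>
      have hpos : 0 < 1 + a (m+1) * μ := by
        have := ha (m+1) (by omega); nlinarith
      have h := mul_le_mul_of_nonneg_left ((key2 m).trans ih)
        (inv_nonneg.mpr hpos.le)
      rw [← mul_assoc, inv_mul_cancel₀ hpos.ne', one_mul] at h
      rw [Finset.prod_Icc_succ_top (by omega)]
      exact h.trans_eq (by ring)
  intro k hk
  obtain ⟨m, rfl⟩ : ∃ m, k = m + 1 := ⟨k - 1, (Nat.succ_pred_eq_of_pos hk).symm⟩
  simp only [Nat.add_sub_cancel]
  have hak := ha (m+1) (by omega)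
  have hb1 : F (x (m+1)) - Fstar
      ≤ (∏ i ∈ Finset.Icc 1 m, (1 + a i * μ)⁻¹) * D 0 / (2 * a (m+1)) := by
    rw [le_div_iff₀ (by positivity)]
    nlinarith [key m, hprod m, hDnn (m+1)]
  refine ⟨hb1, ?_⟩
  intro L_u hL hai
  have hq : 0 < 1 + μ / L_u := by positivity
  have hprodle : (∏ i ∈ Finset.Icc 1 m, (1 + a i * μ)⁻¹)
      ≤ ((1 + μ / L_u) ^ m)⁻¹ := by
    calc (∏ i ∈ Finset.Icc 1 m, (1 + a i * μ)⁻¹)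
        ≤ ∏ _i ∈ Finset.Icc 1 m, (1 + μ / L_u)⁻¹ := by
          apply Finset.prod_le_prod
          · intro i hi
            have hi1 := (Finset.mem_Icc.mp hi).1
            have := ha i hi1
            positivity
          · intro i hi
            have hi1 := (Finset.mem_Icc.mp hi).1
            have h5 := hai i hi1
            apply inv_anti₀ hq
            have : μ / L_u ≤ a i * μ := by
              have : (1 / L_u) * μ ≤ a i * μ := mul_le_mul_of_nonneg_right h5 hμ.le
              calc μ / L_u = (1 / L_u) * μ := by ring
                _ ≤ a i * μ := this
            linarith
      _ = ((1 + μ / L_u)⁻¹) ^ m := by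
          rw [Finset.prod_const, Nat.card_Icc]; norm_num
      _ = ((1 + μ / L_u) ^ m)⁻¹ := by rw [inv_pow]
  have h5 : (2 * a (m+1))⁻¹ ≤ L_u / 2 := by
    have h6 : 2 / L_u ≤ 2 * a (m+1) := by
      have := hai (m+1) (by omega)
      have : 2 * (1 / L_u) ≤ 2 * a (m+1) := by linarith
      calc 2 / L_u = 2 * (1 / L_u) := by ring
        _ ≤ 2 * a (m+1) := this
    have h7 : (2 * a (m+1))⁻¹ ≤ (2 / L_u)⁻¹ :=
      inv_anti₀ (by positivity) h6
    calc (2 * a (m+1))⁻¹ ≤ (2 / L_u)⁻¹ := h7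
      _ = L_u / 2 := by rw [inv_div]
  calc F (x (m+1)) - Fstar
      ≤ (∏ i ∈ Finset.Icc 1 m, (1 + a i * μ)⁻¹) * D 0 / (2 * a (m+1)) := hb1
    _ = ((∏ i ∈ Finset.Icc 1 m, (1 + a i * μ)⁻¹) * D 0) * (2 * a (m+1))⁻¹ :=
        div_eq_mul_inv _ _
    _ ≤ (((1 + μ / L_u) ^ m)⁻¹ * D 0) * (L_u / 2) := by
        apply mul_le_mul (mul_le_mul_of_nonneg_right hprodle (hDnn 0)) h5
          (by positivity) (by positivity)
    _ = ((1 + μ / L_u) ^ m)⁻¹ * (L_u * D 0 / 2) := by ring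
end

section
/- Suppose f has strong convexity parameter μ_f ≥ 0 and Ψ has strong convexity parameter μ_Ψ ≥ 0. Let L > 0 and x ∈ ℝ^n, suppose the descent condition holds at x with constant L, and define the extended composite gradient mapping g_L(x) = (L + μ_Ψ)(x − T_L(x)). Then for every y ∈ ℝ^n: F(y) ≥ F(T_L(x)) + (1/(2(L + μ_Ψ)))‖g_L(x)‖² + ⟨g_L(x), y − x⟩ + ((μ_f + μ_Ψ)/2)‖y − x‖². -/
open Set
open scoped RealInnerProductSpace

/-!
Strong convexity of `f`, read along the segment from `x` to `y`, bounds `f y` below by the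
tangent of `f` at `x` plus `μ_f/2 ‖y − x‖²`. The model minimised by `T` is `(L + μ_Ψ)`-strongly
convex, so its value at `y` exceeds its minimum by `(L + μ_Ψ)/2 ‖y − T‖²`. Adding the two bounds,
replacing the minimum of the model by `F T` via the descent condition, and expanding `‖y − T‖²`
around `x` gives the inequality.
-/

section

variable {E : Type*} [NormedAddCommGroup E]

theorem ConvexOn.add_fderiv_sub_le [NormedSpace ℝ E] {s : Set E} {h : E → ℝ} {h' : E →L[ℝ] ℝ}
    {x y : E} (hh : ConvexOn ℝ s h) (hx : x ∈ s) (hy : y ∈ s) (hd : HasFDerivAt h h' x) :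
    h x + h' (y - x) ≤ h y := by
  have hline : ConvexOn ℝ (AffineMap.lineMap x y ⁻¹' s) (h ∘ AffineMap.lineMap x y) :=
    hh.comp_affineMap _
  have hderiv : HasDerivAt (h ∘ AffineMap.lineMap (k := ℝ) x y) (h' (y - x)) (0 : ℝ) := by
    refine hd.comp_hasDerivAt_of_eq 0 AffineMap.hasDerivAt_lineMap ?_
    simp
  have hslope :=
    hline.le_slope_of_hasDerivAt (by simpa using hx) (by simpa using hy) zero_lt_one hderiv
  rw [slope_def_field] at hslope
  simp only [Function.comp_apply, AffineMap.lineMap_apply_zero, AffineMap.lineMap_apply_one,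
    sub_zero, div_one] at hslope
  linarith

theorem StrongConvexOn.add_inner_add_sq_le_of_hasGradientAt [InnerProductSpace ℝ E]
    [CompleteSpace E] {s : Set E} {f : E → ℝ} {m : ℝ} {f' x y : E}
    (hf : StrongConvexOn s m f) (hx : x ∈ s) (hy : y ∈ s) (hd : HasGradientAt f f' x) :
    f x + ⟪f', y - x⟫ + m / 2 * ‖y - x‖ ^ 2 ≤ f y := by
  have htangent := (strongConvexOn_iff_convex.mp hf).add_fderiv_sub_le hx hy
    (hd.hasFDerivAt.sub ((hasStrictFDerivAt_norm_sq x).hasFDerivAt.const_mul (m / 2)))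
  have hsq : ‖y - x‖ ^ 2 = ‖y‖ ^ 2 - 2 * ⟪x, y - x⟫ - ‖x‖ ^ 2 := by
    rw [norm_sub_sq_real, inner_sub_right, real_inner_self_eq_norm_sq, real_inner_comm]; ring
  simp only [sub_apply, smul_apply, InnerProductSpace.toDual_apply_apply,
    innerSL_apply_apply, smul_eq_mul, nsmul_eq_mul] at htangent
  rw [hsq]
  linarith

theorem StrongConvexOn.add_sq_le_of_isMinOn [NormedSpace ℝ E] {s : Set E} {φ : E → ℝ} {m : ℝ}
    {z y : E}
    (hφ : StrongConvexOn s m φ) (hmin : IsMinOn φ s z) (hz : z ∈ s) (hy : y ∈ s) :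
    φ z + m / 2 * ‖y - z‖ ^ 2 ≤ φ y := by
  have hsegment : ∀ t ∈ Ioo (0 : ℝ) 1, m / 2 * ‖y - z‖ ^ 2 * (1 - t) ≤ φ y - φ z := by
    rintro t ⟨ht0, ht1⟩
    have hconv := hφ.2 hy hz ht0.le (sub_nonneg.mpr ht1.le) (add_sub_cancel t 1)
    have hle : φ z ≤ φ (t • y + (1 - t) • z) :=
      hmin (hφ.1 hy hz ht0.le (sub_nonneg.mpr ht1.le) (add_sub_cancel t 1))
    simp only [smul_eq_mul] at hconv
    refine le_of_mul_le_mul_left ?_ ht0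
    linarith
  have hlim : Filter.Tendsto (fun t : ℝ ↦ m / 2 * ‖y - z‖ ^ 2 * (1 - t)) (nhdsWithin 0 (Ioi 0))
      (nhds (m / 2 * ‖y - z‖ ^ 2)) := by
    have hcont : Continuous fun t : ℝ ↦ m / 2 * ‖y - z‖ ^ 2 * (1 - t) := by fun_prop
    simpa using (hcont.tendsto 0).mono_left nhdsWithin_le_nhds
  have hlimit := le_of_tendsto hlim (Filter.mem_of_superset (Ioo_mem_nhdsGT zero_lt_one) hsegment)
  linarith

theorem StrongConvexOn.const_add_inner_add_norm_sq_add [InnerProductSpace ℝ E] {s : Set E}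
    {Ψ : E → ℝ} {μ : ℝ} (hΨ : StrongConvexOn s μ Ψ) (c L : ℝ) (g x : E) :
    StrongConvexOn s (L + μ) (fun y ↦ c + ⟪g, y - x⟫ + L / 2 * ‖y - x‖ ^ 2 + Ψ y) := by
  rw [strongConvexOn_iff_convex] at hΨ ⊢
  have haffine : ConvexOn ℝ s (fun y ↦ ⟪g - L • x, y⟫ + (c + L / 2 * ‖x‖ ^ 2 - ⟪g, x⟫)) :=
    ((innerₛₗ ℝ (g - L • x)).convexOn hΨ.1).add (convexOn_const _ hΨ.1)
  refine (haffine.add hΨ).congr fun y _ ↦ ?_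
  rw [Pi.add_apply, norm_sub_sq_real, inner_sub_left, inner_sub_right, real_inner_smul_left,
    real_inner_comm x y]
  ring

end

theorem strongly_convex_composite_lower_bound_general {n : ℕ}
    (f Ψ F : Euc n → ℝ) (f' : Euc n → Euc n)
    (hf' : ∀ z, HasGradientAt f (f' z) z)
    (μf μΨ : ℝ)
    (hf : StrongConvexOn Set.univ μf f)
    (hΨ : StrongConvexOn Set.univ μΨ Ψ)
    (hF : ∀ z, F z = f z + Ψ z)
    (L : ℝ) (x T : Euc n)
    (hT : ∀ y, f x + ⟪f' x, T - x⟫ + L / 2 * ‖T - x‖ ^ 2 + Ψ T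
        ≤ f x + ⟪f' x, y - x⟫ + L / 2 * ‖y - x‖ ^ 2 + Ψ y)
    (hdesc : f T ≤ f x + ⟪f' x, T - x⟫ + L / 2 * ‖T - x‖ ^ 2) :
    ∀ y, F y ≥ F T + 1 / (2 * (L + μΨ)) * ‖(L + μΨ) • (x - T)‖ ^ 2
        + ⟪(L + μΨ) • (x - T), y - x⟫ + (μf + μΨ) / 2 * ‖y - x‖ ^ 2 := by
  intro y
  have hfy := hf.add_inner_add_sq_le_of_hasGradientAt (mem_univ x) (mem_univ y) (hf' x)
  have hmodel := (hΨ.const_add_inner_add_norm_sq_add (f x) L (f' x) x).add_sq_le_of_isMinOn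
    (isMinOn_univ_iff.mpr hT) (mem_univ T) (mem_univ y)
  have hgrad : 1 / (2 * (L + μΨ)) * ‖(L + μΨ) • (x - T)‖ ^ 2 = (L + μΨ) / 2 * ‖x - T‖ ^ 2 := by
    rw [norm_smul, mul_pow, Real.norm_eq_abs, sq_abs]
    rcases eq_or_ne (L + μΨ) 0 with h | h
    · simp [h]
    · field_simp
  have hyT : ‖y - T‖ ^ 2 = ‖y - x‖ ^ 2 + 2 * ⟪x - T, y - x⟫ + ‖x - T‖ ^ 2 := by
    rw [← sub_add_sub_cancel y x T, norm_add_sq_real, real_inner_comm]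
  rw [hF y, hF T, hgrad, real_inner_smul_left]
  rw [hyT] at hmodel
  rw [norm_sub_rev T x] at hdesc hmodel
  linarith

/-- Lemma 4: if `f` and `Ψ` have strong convexity parameters
`μ_f ≥ 0` and `μ_Ψ ≥ 0`, the descent condition holds at `x` with constant `L > 0`, and
`g_L(x) = (L + μ_Ψ)(x − T_L(x))`, then for every `y`:
`F(y) ≥ F(T_L(x)) + (1/(2(L+μ_Ψ)))‖g_L(x)‖² + ⟨g_L(x), y − x⟩ + ((μ_f+μ_Ψ)/2)‖y − x‖²`. -/
theorem strongly_convex_composite_lower_bound {n : ℕ}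
    (f Ψ F : Euc n → ℝ) (f' : Euc n → Euc n)
    (hf' : ∀ z, HasGradientAt f (f' z) z)
    (μf μΨ : ℝ) (hμf : 0 ≤ μf) (hμΨ : 0 ≤ μΨ)
    (hf : StrongConvexOn Set.univ μf f)
    (hΨ : StrongConvexOn Set.univ μΨ Ψ)
    (hΨlsc : LowerSemicontinuous Ψ)
    (hF : ∀ z, F z = f z + Ψ z)
    (L : ℝ) (hL : 0 < L) (x T : Euc n)
    (hT : ∀ y, f x + ⟪f' x, T - x⟫ + L / 2 * ‖T - x‖ ^ 2 + Ψ T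
        ≤ f x + ⟪f' x, y - x⟫ + L / 2 * ‖y - x‖ ^ 2 + Ψ y)
    (hdesc : f T ≤ f x + ⟪f' x, T - x⟫ + L / 2 * ‖T - x‖ ^ 2) :
    ∀ y, F y ≥ F T + 1 / (2 * (L + μΨ)) * ‖(L + μΨ) • (x - T)‖ ^ 2
        + ⟪(L + μΨ) • (x - T), y - x⟫ + (μf + μΨ) / 2 * ‖y - x‖ ^ 2 :=
  strongly_convex_composite_lower_bound_general f Ψ F f' hf' μf μΨ hf hΨ hF L x T hT hdesc
end

section
/- Let x* be a minimizer of F with F* = F(x*), let μ ≥ 0, let H ∈ ℝ^p and let G be an n×p real matrix with columns g_1, …, g_p, let x̄ ∈ ℝ^n, and suppose F* ≥ max_i {(H)_i + ⟨g_i, x*⟩} + (μ/2)‖x̄ − x*‖². Let λ̄ ∈ Δ_p, a > 0, and set x₊ = x̄ − a G λ̄. If F(x₊) ≤ ⟨λ̄, H⟩ + ⟨G λ̄, x̄⟩ − (a/2)‖G λ̄‖², then (1/2)‖x₊ − x*‖² ≤ (1/2)(1 − a μ)‖x̄ − x*‖² + a (F* − F(x₊)). -/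
open Set
open scoped RealInnerProductSpace

/-- successful-step case of Proposition 5: if the bundle model satisfies the
strengthened condition `F* ≥ max_i {(H)_i + ⟨g_i, x*⟩} + (μ/2)‖x̄ − x*‖²`, `λ̄ ∈ Δ_p`, `a > 0`,
`x₊ = x̄ − a G λ̄`, and `F(x₊) ≤ ⟨λ̄, H⟩ + ⟨G λ̄, x̄⟩ − (a/2)‖G λ̄‖²`, then
`(1/2)‖x₊ − x*‖² ≤ (1/2)(1 − aμ)‖x̄ − x*‖² + a (F* − F(x₊))`. -/
theorem gmm_sc_successful_step {n p : ℕ}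
    (f Ψ F : Euc n → ℝ)
    (hf : ConvexOn ℝ Set.univ f) (hfd : Differentiable ℝ f)
    (hΨ : ConvexOn ℝ Set.univ Ψ) (hΨlsc : LowerSemicontinuous Ψ)
    (hF : ∀ z, F z = f z + Ψ z)
    (xstar : Euc n) (hmin : ∀ y, F xstar ≤ F y)
    (μ : ℝ) (hμ : 0 ≤ μ)
    (H : Fin p → ℝ) (g : Fin p → Euc n) (xbar : Euc n)
    (hmodel : ∀ i : Fin p, H i + ⟪g i, xstar⟫ + μ / 2 * ‖xbar - xstar‖ ^ 2 ≤ F xstar)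
    (lam : Fin p → ℝ) (hlam : lam ∈ stdSimplex ℝ (Fin p))
    (a : ℝ) (ha : 0 < a)
    (hstep : F (xbar - a • ∑ i, lam i • g i)
        ≤ (∑ i, lam i * H i) + ⟪∑ i, lam i • g i, xbar⟫ - a / 2 * ‖∑ i, lam i • g i‖ ^ 2) :
    1 / 2 * ‖(xbar - a • ∑ i, lam i • g i) - xstar‖ ^ 2
      ≤ 1 / 2 * (1 - a * μ) * ‖xbar - xstar‖ ^ 2
        + a * (F xstar - F (xbar - a • ∑ i, lam i • g i)) := by
  set d := ∑ i, lam i • g i with hd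
  have h1 : ⟪d, xstar⟫ = ∑ i, lam i * ⟪g i, xstar⟫ := by
    rw [hd, sum_inner]
    exact Finset.sum_congr rfl fun i _ => real_inner_smul_left _ _ _
  have hsum1 : ∑ i, lam i = 1 := hlam.2
  have hconv : (∑ i, lam i * H i) + ⟪d, xstar⟫ + μ / 2 * ‖xbar - xstar‖ ^ 2
      ≤ F xstar := by
    have : ∑ i, lam i * (H i + ⟪g i, xstar⟫ + μ / 2 * ‖xbar - xstar‖ ^ 2)
        ≤ ∑ i, lam i * F xstar := by
      refine Finset.sum_le_sum fun i _ => ?_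
      exact mul_le_mul_of_nonneg_left (hmodel i) (hlam.1 i)
    rw [← Finset.sum_mul, hsum1, one_mul] at this
    calc (∑ i, lam i * H i) + ⟪d, xstar⟫ + μ / 2 * ‖xbar - xstar‖ ^ 2
        = ∑ i, lam i * (H i + ⟪g i, xstar⟫ + μ / 2 * ‖xbar - xstar‖ ^ 2) := by
          simp only [mul_add, Finset.sum_add_distrib, ← Finset.sum_mul, hsum1, one_mul, h1]
      _ ≤ F xstar := this
  have hexp : ‖(xbar - a • d) - xstar‖ ^ 2
      = ‖xbar - xstar‖ ^ 2 - 2 * (a * ⟪d, xbar - xstar⟫) + a ^ 2 * ‖d‖ ^ 2 := by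
    have : (xbar - a • d) - xstar = (xbar - xstar) - a • d := by abel
    rw [this, norm_sub_sq_real, real_inner_smul_right, real_inner_comm, norm_smul]
    simp [mul_pow, abs_of_pos ha]
    try ring
  have hsplit : ⟪d, xbar - xstar⟫ = ⟪d, xbar⟫ - ⟪d, xstar⟫ := inner_sub_right _ _ _
  nlinarith [hstep, hconv, hexp, hsplit, ha, sq_nonneg ‖d‖]
end

section
/- Let x* be a minimizer of F with F* = F(x*), let μ > 0, L_u > 0, μ_Ψ ≥ 0 and set τ_u = 1/(L_u + μ_Ψ) and q_u = μ τ_u, with q_u < 1. Let (x_k)_{k≥0} be a sequence in ℝ^n and (a_k)_{k≥1} reals with τ_u ≤ a_k < 1/μ for all k ≥ 1, such that F(x_{k+1}) ≤ F(x_k) for all k ≥ 1 and (1/2)‖x_{i+1} − x*‖² ≤ (1/2)(1 − a_{i+1} μ)‖x_i − x*‖² + a_{i+1}(F* − F(x_{i+1})) for all i ≥ 0. Then for every k ≥ 1, with π_i = Π_{j=1}^{i} 1/(1 − a_j μ): F(x_k) − F* ≤ ‖x₀ − x*‖² / (2 Σ_{i=1}^{k} a_i π_i) ≤ μ (1 −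 q_u)^k ‖x₀ − x*‖² / (1 − (1 − q_u)^k). -/
open Set
open scoped RealInnerProductSpace

/-!
Multiplying the contraction at step `i` by `π_i = ∏_{j ≤ i} (1 - a_j μ)⁻¹` makes it
telescope: `π_k ‖x_k - x*‖² / 2 + Σ_{i ≤ k} a_i π_i (F(x_i) - F*) ≤ ‖x₀ - x*‖² / 2`.
Monotonicity of `F(x_i)` bounds the sum from below by `(F(x_k) - F*) Σ_{i ≤ k} a_i π_i`,
which gives the first inequality. Since `a_j ≥ τ_u`, every factor satisfies
`1 - a_j μ ≤ 1 - q_u`, so `Σ_{i ≤ k} a_i π_i` dominates the geometric sum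
`Σ_{i ≤ k} τ_u (1 - q_u)^{-i} = (1 - (1 - q_u)^k) / (μ (1 - q_u)^k)`, which gives the second.
-/

open Finset

section Contraction

variable {a c d e : ℕ → ℝ}

theorem prod_Icc_inv_nonneg (hc : ∀ j, 1 ≤ j → 0 < c j) (i : ℕ) :
    0 ≤ ∏ j ∈ Finset.Icc 1 i, (c j)⁻¹ :=
  prod_nonneg fun j hj => (inv_pos.2 (hc j (Finset.mem_Icc.1 hj).1)).le

theorem add_sum_mul_prod_inv_le_of_contraction (hc : ∀ j, 1 ≤ j → 0 < c j)
    (hstep : ∀ i, d (i + 1) ≤ c (i + 1) * d i - a (i + 1) * e (i + 1)) (m : ℕ) :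
    (∏ j ∈ Finset.Icc 1 m, (c j)⁻¹) * d m
        + ∑ i ∈ Finset.Icc 1 m, a i * (∏ j ∈ Finset.Icc 1 i, (c j)⁻¹) * e i ≤ d 0 := by
  induction m with
  | zero => simp
  | succ m ih =>
    set P := ∏ j ∈ Finset.Icc 1 m, (c j)⁻¹
    have hP : 0 ≤ P := prod_Icc_inv_nonneg hc m
    have hcm : 0 < c (m + 1) := hc (m + 1) (by omega)
    have hscaled : P * (c (m + 1))⁻¹ * (d (m + 1) + a (m + 1) * e (m + 1)) ≤ P * d m := by
      calc P * (c (m + 1))⁻¹ * (d (m + 1) + a (m + 1) * e (m + 1))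
          ≤ P * (c (m + 1))⁻¹ * (c (m + 1) * d m) := by
            gcongr
            linarith [hstep m]
        _ = P * d m := by field_simp
    rw [prod_Icc_succ_top (by omega), sum_Icc_succ_top (by omega),
      prod_Icc_succ_top (by omega)]
    linarith

theorem mul_sum_mul_prod_inv_le_of_contraction (hc : ∀ j, 1 ≤ j → 0 < c j)
    (hstep : ∀ i, d (i + 1) ≤ c (i + 1) * d i - a (i + 1) * e (i + 1))
    {k : ℕ} (hd : 0 ≤ d k) (ha : ∀ i ∈ Finset.Icc 1 k, 0 ≤ a i)
    (he : ∀ i ∈ Finset.Icc 1 k, e k ≤ e i) :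
    e k * ∑ i ∈ Finset.Icc 1 k, a i * ∏ j ∈ Finset.Icc 1 i, (c j)⁻¹ ≤ d 0 := by
  have hsum : e k * ∑ i ∈ Finset.Icc 1 k, a i * ∏ j ∈ Finset.Icc 1 i, (c j)⁻¹
      ≤ ∑ i ∈ Finset.Icc 1 k, a i * (∏ j ∈ Finset.Icc 1 i, (c j)⁻¹) * e i := by
    rw [mul_sum]
    refine sum_le_sum fun i hi => ?_
    rw [mul_comm]
    exact mul_le_mul_of_nonneg_left (he i hi) (mul_nonneg (ha i hi) (prod_Icc_inv_nonneg hc i))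
  have hlast : 0 ≤ (∏ j ∈ Finset.Icc 1 k, (c j)⁻¹) * d k :=
    mul_nonneg (prod_Icc_inv_nonneg hc k) hd
  linarith [add_sum_mul_prod_inv_le_of_contraction hc hstep k]

theorem inv_pow_le_prod_inv {r : ℝ} {i : ℕ}
    (hc : ∀ j ∈ Finset.Icc 1 i, 0 < c j ∧ c j ≤ r) :
    (r ^ i)⁻¹ ≤ ∏ j ∈ Finset.Icc 1 i, (c j)⁻¹ := by
  calc (r ^ i)⁻¹ = ∏ _j ∈ Finset.Icc 1 i, r⁻¹ := by simp
    _ ≤ ∏ j ∈ Finset.Icc 1 i, (c j)⁻¹ :=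
      prod_le_prod (fun j hj => (inv_pos.2 ((hc j hj).1.trans_le (hc j hj).2)).le)
        fun j hj => inv_anti₀ (hc j hj).1 (hc j hj).2

theorem sum_Icc_mul_inv_pow_one_sub {μ τ : ℝ} (hμ : μ ≠ 0) (hq : μ * τ ≠ 1) (k : ℕ) :
    ∑ i ∈ Finset.Icc 1 k, τ * ((1 - μ * τ) ^ i)⁻¹
      = (1 - (1 - μ * τ) ^ k) / (μ * (1 - μ * τ) ^ k) := by
  have hr : 1 - μ * τ ≠ 0 := sub_ne_zero.2 hq.symm
  induction k with
  | zero => simp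
  | succ k ih =>
    rw [sum_Icc_succ_top (by omega), ih]
    field_simp
    ring

theorem div_le_sum_mul_prod_inv {μ τ : ℝ} (hμ : 0 < μ) (hτ : 0 ≤ τ) (hq : μ * τ < 1)
    (ha : ∀ j, 1 ≤ j → τ ≤ a j ∧ a j < 1 / μ) (k : ℕ) :
    (1 - (1 - μ * τ) ^ k) / (μ * (1 - μ * τ) ^ k)
      ≤ ∑ i ∈ Finset.Icc 1 k, a i * ∏ j ∈ Finset.Icc 1 i, (1 - a j * μ)⁻¹ := by
  rw [← sum_Icc_mul_inv_pow_one_sub hμ.ne' hq.ne]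
  refine sum_le_sum fun i hi => ?_
  have hi := (Finset.mem_Icc.1 hi).1
  refine mul_le_mul (ha i hi).1 (inv_pow_le_prod_inv fun j hj => ?_) (by positivity)
    (hτ.trans (ha i hi).1)
  obtain ⟨hτa, haμ⟩ := ha j (Finset.mem_Icc.1 hj).1
  exact ⟨sub_pos.2 ((lt_div_iff₀ hμ).1 haμ),
    by linarith [mul_le_mul_of_nonneg_left hτa hμ.le]⟩

end Contraction

theorem gmm_sc_linear_rate_general {n : ℕ}
    (F : Euc n → ℝ)
    (xstar : Euc n)
    (μ L_u μΨ : ℝ) (hμ : 0 < μ) (hLu : 0 < L_u) (hμΨ : 0 ≤ μΨ)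
    (hqu : μ * (1 / (L_u + μΨ)) < 1)
    (x : ℕ → Euc n) (a : ℕ → ℝ)
    (ha : ∀ k, 1 ≤ k → 1 / (L_u + μΨ) ≤ a k ∧ a k < 1 / μ)
    (hmono : ∀ k, 1 ≤ k → F (x (k + 1)) ≤ F (x k))
    (hiter : ∀ i : ℕ,
      1 / 2 * ‖x (i + 1) - xstar‖ ^ 2
        ≤ 1 / 2 * (1 - a (i + 1) * μ) * ‖x i - xstar‖ ^ 2
          + a (i + 1) * (F xstar - F (x (i + 1)))) :
    ∀ k : ℕ, 1 ≤ k →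
      F (x k) - F xstar
        ≤ ‖x 0 - xstar‖ ^ 2
            / (2 * ∑ i ∈ Finset.Icc 1 k, a i * ∏ j ∈ Finset.Icc 1 i, (1 - a j * μ)⁻¹)
      ∧ ‖x 0 - xstar‖ ^ 2
            / (2 * ∑ i ∈ Finset.Icc 1 k, a i * ∏ j ∈ Finset.Icc 1 i, (1 - a j * μ)⁻¹)
          ≤ μ * (1 - μ * (1 / (L_u + μΨ))) ^ k * ‖x 0 - xstar‖ ^ 2
              / (1 - (1 - μ * (1 / (L_u + μΨ))) ^ k) := by
  intro k hk
  set τ := 1 / (L_u + μΨ)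
  have hτ : 0 < τ := one_div_pos.2 (by linarith)
  have hr : 0 < (1 - μ * τ) ^ k := pow_pos (by linarith) k
  have hr1 : (1 - μ * τ) ^ k < 1 :=
    pow_lt_one₀ (by linarith) (by linarith [mul_pos hμ hτ]) (by omega)
  set S := ∑ i ∈ Finset.Icc 1 k, a i * ∏ j ∈ Finset.Icc 1 i, (1 - a j * μ)⁻¹
  have hgeom : (1 - (1 - μ * τ) ^ k) / (μ * (1 - μ * τ) ^ k) ≤ S :=
    div_le_sum_mul_prod_inv hμ hτ.le hqu ha k
  have hS : 0 < S := (div_pos (by linarith) (by positivity)).trans_le hgeom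
  have hFmono : AntitoneOn (fun i => F (x i)) (Ici 1) := antitoneOn_nat_Ici_of_succ_le hmono
  have hrate : (F (x k) - F xstar) * S ≤ 1 / 2 * ‖x 0 - xstar‖ ^ 2 :=
    mul_sum_mul_prod_inv_le_of_contraction (d := fun i => 1 / 2 * ‖x i - xstar‖ ^ 2)
      (e := fun i => F (x i) - F xstar)
      (fun j hj => sub_pos.2 ((lt_div_iff₀ hμ).1 (ha j hj).2)) (fun i => by linarith [hiter i])
      (by positivity) (fun i hi => (hτ.trans_le (ha i (Finset.mem_Icc.1 hi).1).1).le)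
      fun i hi => by
        have hi := Finset.mem_Icc.1 hi
        linarith [hFmono (mem_Ici.2 hi.1) (mem_Ici.2 hk) hi.2]
  refine ⟨?_, ?_⟩
  · rw [le_div_iff₀ (by positivity)]
    linarith
  · calc ‖x 0 - xstar‖ ^ 2 / (2 * S)
        ≤ ‖x 0 - xstar‖ ^ 2 / ((1 - (1 - μ * τ) ^ k) / (μ * (1 - μ * τ) ^ k)) :=
          div_le_div_of_nonneg_left (sq_nonneg _) (div_pos (by linarith) (by positivity))
            (by linarith)
      _ = μ * (1 - μ * τ) ^ k * ‖x 0 - xstar‖ ^ 2 / (1 - (1 - μ * τ) ^ k) := by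
          rw [div_div_eq_mul_div]; ring

/-- Theorem 6: under the strongly convex per-iteration contraction
`(1/2)‖x_{i+1} − x*‖² ≤ (1/2)(1 − a_{i+1}μ)‖x_i − x*‖² + a_{i+1}(F* − F(x_{i+1}))`,
monotonicity, and `τ_u ≤ a_k < 1/μ`, a linear rate holds: for `k ≥ 1`, with
`π_i = Π_{j=1}^i 1/(1 − a_j μ)` and `q_u = μ/(L_u + μ_Ψ)`,
`F(x_k) − F* ≤ ‖x₀ − x*‖²/(2 Σ_{i=1}^k a_i π_i)
  ≤ μ (1 − q_u)^k ‖x₀ − x*‖²/(1 − (1 − q_u)^k)`. -/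
theorem gmm_sc_linear_rate {n : ℕ}
    (f Ψ F : Euc n → ℝ)
    (hf : ConvexOn ℝ Set.univ f) (hfd : Differentiable ℝ f)
    (hΨ : ConvexOn ℝ Set.univ Ψ) (hΨlsc : LowerSemicontinuous Ψ)
    (hF : ∀ z, F z = f z + Ψ z)
    (xstar : Euc n) (hmin : ∀ y, F xstar ≤ F y)
    (μ L_u μΨ : ℝ) (hμ : 0 < μ) (hLu : 0 < L_u) (hμΨ : 0 ≤ μΨ)
    (hqu : μ * (1 / (L_u + μΨ)) < 1)
    (x : ℕ → Euc n) (a : ℕ → ℝ)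
    (ha : ∀ k, 1 ≤ k → 1 / (L_u + μΨ) ≤ a k ∧ a k < 1 / μ)
    (hmono : ∀ k, 1 ≤ k → F (x (k + 1)) ≤ F (x k))
    (hiter : ∀ i : ℕ,
      1 / 2 * ‖x (i + 1) - xstar‖ ^ 2
        ≤ 1 / 2 * (1 - a (i + 1) * μ) * ‖x i - xstar‖ ^ 2
          + a (i + 1) * (F xstar - F (x (i + 1)))) :
    ∀ k : ℕ, 1 ≤ k →
      F (x k) - F xstar
        ≤ ‖x 0 - xstar‖ ^ 2
            / (2 * ∑ i ∈ Finset.Icc 1 k, a i * ∏ j ∈ Finset.Icc 1 i, (1 - a j * μ)⁻¹)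
      ∧ ‖x 0 - xstar‖ ^ 2
            / (2 * ∑ i ∈ Finset.Icc 1 k, a i * ∏ j ∈ Finset.Icc 1 i, (1 - a j * μ)⁻¹)
          ≤ μ * (1 - μ * (1 / (L_u + μΨ))) ^ k * ‖x 0 - xstar‖ ^ 2
              / (1 - (1 - μ * (1 / (L_u + μΨ))) ^ k) :=
  gmm_sc_linear_rate_general F xstar μ L_u μΨ hμ hLu hμΨ hqu x a ha hmono hiter
end

section
/- Let A > 0, a > 0, L > 0 satisfy L a² = A + a. Let x₀, x_k, v ∈ ℝ^n, h ∈ ℝ, g ∈ ℝ^n, and define the estimate function ψ(x) = h + ⟨g, x⟩ + (1/(2A))‖x − x₀‖²; let v be its minimizer and ψ* its minimum value, and assume ψ* ≥ F(x_k). Set y = (A x_k + a v)/(A + a), suppose the descent condition holds at y with constant L, and set x₊ = T_L(y), ḡ = L(y − x₊), h̄ = F(x₊) + (1/(2L))‖ḡ‖² − ⟨ḡ, y⟩. Then the new estimate function ψ̄(x) = (A (h + ⟨g, x⟩) + a (h̄ + ⟨ḡ, x⟩))/(A + a) + (1/(2(A + a)))‖x − x₀‖² satisfies inf_{x ∈ ℝ^n}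 ψ̄(x) ≥ F(x₊). -/
/-!
The old estimate function and the proximal model at `y` are both strongly convex, so each lies
above its minimum by the quadratic `m/2 ‖x - u‖²` around its minimizer `u`. For the old estimate
function this gives `ψ(z) ≥ F(x_k) + (1/(2A))‖z - v‖²`. For the proximal model, together with the
gradient inequality for `f` and the descent condition, it gives the simple lower bound
`F(x) ≥ ℓ(x) := F(x₊) + (1/(2L))‖ḡ‖² + ⟨ḡ, x - y⟩`, and `ℓ(x) = h̄ + ⟨ḡ, x⟩`. As `ℓ` is affine and
`A x_k + a v = (A + a) y`, we get `A ℓ(x_k) + a ℓ(z) = (A + a) ℓ(y) + a ⟨ḡ, z - v⟩`, and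
`L a² = A + a` turns the remainder into the square `½ ‖a ḡ + (z - v)‖² ≥ 0`.
-/

open Set Filter Topology
open scoped RealInnerProductSpace

variable {E : Type*} [NormedAddCommGroup E]

section NormedSpace

variable [NormedSpace ℝ E] {s : Set E} {f : E → ℝ} {x y : E}

theorem ConvexOn.add_le_of_hasFDerivAt {f' : E →L[ℝ] ℝ} (hf : ConvexOn ℝ s f)
    (hx : x ∈ s) (hy : y ∈ s) (hf' : HasFDerivAt f f' y) : f y + f' (x - y) ≤ f x := by
  have hderiv : HasDerivAt (f ∘ AffineMap.lineMap (k := ℝ) y x) (f' (x - y)) 0 :=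
    (by simpa using hf' : HasFDerivAt f f' (AffineMap.lineMap y x (0 : ℝ))).comp_hasDerivAt 0
      AffineMap.hasDerivAt_lineMap
  have hslope_le := (hf.comp_affineMap (AffineMap.lineMap (k := ℝ) y x)).le_slope_of_hasDerivAt
    (x := 0) (y := 1) (by simpa) (by simpa) one_pos hderiv
  have hslope : slope (f ∘ AffineMap.lineMap (k := ℝ) y x) 0 1 = f x - f y := by simp [slope]
  linarith

theorem StrongConvexOn.add_le_of_isMinOn {m : ℝ} {u : E} (hf : StrongConvexOn s m f)
    (hmin : IsMinOn f s u) (hu : u ∈ s) (hx : x ∈ s) : f u + m / 2 * ‖x - u‖ ^ 2 ≤ f x := by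
  have hsegment : ∀ t ∈ Ioo (0 : ℝ) 1, f u + (1 - t) * (m / 2 * ‖x - u‖ ^ 2) ≤ f x := by
    rintro t ⟨ht0, ht1⟩
    have hconv := hf.2 hu hx (sub_nonneg.2 ht1.le) ht0.le (sub_add_cancel 1 t)
    have hle := hmin (hf.1 hu hx (sub_nonneg.2 ht1.le) ht0.le (sub_add_cancel 1 t))
    simp only [smul_eq_mul, norm_sub_rev u x, mem_ofPred_eq] at hconv hle
    have : t * (f u + (1 - t) * (m / 2 * ‖x - u‖ ^ 2)) ≤ t * f x := by linarith
    exact le_of_mul_le_mul_left this ht0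
  have hlim : Tendsto (fun t : ℝ => f u + (1 - t) * (m / 2 * ‖x - u‖ ^ 2)) (𝓝[>] 0)
      (𝓝 (f u + (1 - 0) * (m / 2 * ‖x - u‖ ^ 2))) :=
    ((continuous_const.add ((continuous_const.sub continuous_id).mul continuous_const)).tendsto
      0).mono_left nhdsWithin_le_nhds
  simpa using le_of_tendsto hlim (eventually_of_mem (Ioo_mem_nhdsGT one_pos) hsegment)

end NormedSpace

section InnerProductSpace

variable [InnerProductSpace ℝ E] {s : Set E} {f : E → ℝ}

theorem ConvexOn.add_inner_le_of_hasGradientAt [CompleteSpace E] {f' x y : E}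
    (hf : ConvexOn ℝ s f) (hx : x ∈ s) (hy : y ∈ s) (hf' : HasGradientAt f f' y) :
    f y + ⟪f', x - y⟫ ≤ f x :=
  hf.add_le_of_hasFDerivAt hx hy hf'.hasFDerivAt

theorem ConvexOn.strongConvexOn_add_sq_norm_sub (hf : ConvexOn ℝ s f) (m : ℝ) (c : E) :
    StrongConvexOn s m fun x => f x + m / 2 * ‖x - c‖ ^ 2 := by
  rw [strongConvexOn_iff_convex]
  refine ((hf.add ((innerₛₗ ℝ (-m • c)).convexOn hf.1)).add_const (m / 2 * ‖c‖ ^ 2)).congr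
    fun x _ => ?_
  simp [norm_sub_sq_real, real_inner_comm x c]
  ring

theorem quadratic_estimate_growth {c A : ℝ} {g x0 v : E}
    (hv : ∀ z, c + ⟪g, v⟫ + 1 / (2 * A) * ‖v - x0‖ ^ 2 ≤ c + ⟪g, z⟫ + 1 / (2 * A) * ‖z - x0‖ ^ 2)
    (z : E) :
    c + ⟪g, v⟫ + 1 / (2 * A) * ‖v - x0‖ ^ 2 + 1 / (2 * A) * ‖z - v‖ ^ 2
      ≤ c + ⟪g, z⟫ + 1 / (2 * A) * ‖z - x0‖ ^ 2 := by
  have hm : A⁻¹ / 2 = 1 / (2 * A) := by rw [inv_div_left, one_div]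
  have hmin : IsMinOn (fun x => ⟪g, x⟫ + A⁻¹ / 2 * ‖x - x0‖ ^ 2) univ v := fun x _ => by
    rw [mem_ofPred_eq, hm]
    linarith [hv x]
  have := (((innerₛₗ ℝ g).convexOn convex_univ).strongConvexOn_add_sq_norm_sub
    A⁻¹ x0).add_le_of_isMinOn hmin (mem_univ v) (mem_univ z)
  simp only [innerₛₗ_apply_apply, hm] at this
  linarith

theorem prox_grad_lower_bound [CompleteSpace E] {Ψ : E → ℝ} {g y xplus : E} {L : ℝ}
    (hf : ConvexOn ℝ univ f) (hf' : HasGradientAt f g y) (hΨ : ConvexOn ℝ univ Ψ)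
    (hT : ∀ z, f y + ⟪g, xplus - y⟫ + L / 2 * ‖xplus - y‖ ^ 2 + Ψ xplus
        ≤ f y + ⟪g, z - y⟫ + L / 2 * ‖z - y‖ ^ 2 + Ψ z)
    (hdesc : f xplus ≤ f y + ⟪g, xplus - y⟫ + L / 2 * ‖xplus - y‖ ^ 2) (x : E) :
    f xplus + Ψ xplus + L / 2 * ‖y - xplus‖ ^ 2 + L * ⟪y - xplus, x - y⟫ ≤ f x + Ψ x := by
  have hmin : IsMinOn (fun z => ⟪g, z⟫ + Ψ z + L / 2 * ‖z - y‖ ^ 2) univ xplus := fun z _ => by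
    have := hT z
    simp only [inner_sub_right, mem_ofPred_eq] at this ⊢
    linarith
  have hgrowth := ((((innerₛₗ ℝ g).convexOn convex_univ).add hΨ).strongConvexOn_add_sq_norm_sub
    L y).add_le_of_isMinOn hmin (mem_univ xplus) (mem_univ x)
  have hgrad := hf.add_inner_le_of_hasGradientAt (mem_univ x) (mem_univ y) hf'
  have hsplit : x - xplus = (x - y) + (y - xplus) := by abel
  simp only [Pi.add_apply, innerₛₗ_apply_apply, hsplit, norm_add_sq_real,
    norm_sub_rev xplus y] at hgrowth hdesc
  rw [real_inner_comm]
  simp only [inner_sub_right] at hgrad hdesc hgrowth ⊢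
  linarith

theorem le_aggregate_of_lower_bounds {A a L Fp Fk c : ℝ} {x0 xk v y z w : E} (hA : 0 < A)
    (ha : 0 ≤ a) (hweight : L * a ^ 2 = A + a) (hy : (A + a) • y = A • xk + a • v)
    (hlow : Fp + L / 2 * ‖w‖ ^ 2 + L * ⟪w, xk - y⟫ ≤ Fk)
    (hold : Fk + 1 / (2 * A) * ‖z - v‖ ^ 2 ≤ c + 1 / (2 * A) * ‖z - x0‖ ^ 2) :
    Fp ≤ (A * c + a * (Fp + L / 2 * ‖w‖ ^ 2 + L * ⟪w, z - y⟫)) / (A + a)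
      + 1 / (2 * (A + a)) * ‖z - x0‖ ^ 2 := by
  have hAa : 0 < A + a := by positivity
  have hcomb : A • (xk - y) + a • (z - y) = a • (z - v) := by
    rw [smul_sub, smul_sub, smul_sub, ← add_sub_add_comm, ← add_smul, hy]
    abel
  have hinner : A * ⟪w, xk - y⟫ + a * ⟪w, z - y⟫ = a * ⟪w, z - v⟫ := by
    rw [← real_inner_smul_right, ← real_inner_smul_right, ← inner_add_right, hcomb,
      real_inner_smul_right]
  have hsq : ‖(a * L) • w + (z - v)‖ ^ 2
      = (A + a) * (L * ‖w‖ ^ 2) + 2 * (a * L * ⟪w, z - v⟫) + ‖z - v‖ ^ 2 := by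
    rw [norm_add_sq_real, norm_smul, real_inner_smul_left, mul_pow, Real.norm_eq_abs, sq_abs,
      ← hweight]
    ring
  have hlowA := mul_le_mul_of_nonneg_left hlow hA.le
  have holdA := mul_le_mul_of_nonneg_left hold hA.le
  have hhalf : A * (1 / (2 * A)) = 1 / 2 := by field_simp
  rw [mul_add, mul_add, ← mul_assoc, ← mul_assoc, hhalf] at holdA
  rw [div_add' _ _ _ hAa.ne', le_div_iff₀ hAa]
  have hx0 : 1 / (2 * (A + a)) * ‖z - x0‖ ^ 2 * (A + a) = 1 / 2 * ‖z - x0‖ ^ 2 := by field_simp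
  linear_combination hlowA + holdA - L * hinner + 1 / 2 * hsq - hx0
    + 1 / 2 * sq_nonneg ‖(a * L) • w + (z - v)‖

end InnerProductSpace

theorem agmm_estimate_feasibility_general {n : ℕ}
    (f Ψ F : Euc n → ℝ) (f' : Euc n → Euc n)
    (hf : ConvexOn ℝ Set.univ f)
    (hf' : ∀ z, HasGradientAt f (f' z) z)
    (hΨ : ConvexOn ℝ Set.univ Ψ)
    (hF : ∀ z, F z = f z + Ψ z)
    (A a L : ℝ) (hA : 0 < A) (ha : 0 < a) (hL : 0 < L)
    (hweight : L * a ^ 2 = A + a)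
    (x0 xk v : Euc n) (h : ℝ) (g : Euc n)
    (hv : ∀ z, h + ⟪g, v⟫ + 1 / (2 * A) * ‖v - x0‖ ^ 2
        ≤ h + ⟪g, z⟫ + 1 / (2 * A) * ‖z - x0‖ ^ 2)
    (hfeas : F xk ≤ h + ⟪g, v⟫ + 1 / (2 * A) * ‖v - x0‖ ^ 2)
    (y : Euc n) (hy : y = (A + a)⁻¹ • (A • xk + a • v))
    (xplus : Euc n)
    (hT : ∀ z, f y + ⟪f' y, xplus - y⟫ + L / 2 * ‖xplus - y‖ ^ 2 + Ψ xplus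
        ≤ f y + ⟪f' y, z - y⟫ + L / 2 * ‖z - y‖ ^ 2 + Ψ z)
    (hdesc : f xplus ≤ f y + ⟪f' y, xplus - y⟫ + L / 2 * ‖xplus - y‖ ^ 2)
    (gbar : Euc n) (hgbar : gbar = L • (y - xplus))
    (hbar : ℝ) (hhbar : hbar = F xplus + 1 / (2 * L) * ‖gbar‖ ^ 2 - ⟪gbar, y⟫) :
    ∀ z, F xplus ≤ (A * (h + ⟪g, z⟫) + a * (hbar + ⟪gbar, z⟫)) / (A + a)
        + 1 / (2 * (A + a)) * ‖z - x0‖ ^ 2 := by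
  intro z
  have hlow := prox_grad_lower_bound hf (hf' y) hΨ hT hdesc xk
  rw [← hF, ← hF] at hlow
  have hold : F xk + 1 / (2 * A) * ‖z - v‖ ^ 2 ≤ h + ⟪g, z⟫ + 1 / (2 * A) * ‖z - x0‖ ^ 2 := by
    linarith [quadratic_estimate_growth hv z]
  have hyA : (A + a) • y = A • xk + a • v := by rw [hy, smul_inv_smul₀ (by positivity)]
  have hnew : hbar + ⟪gbar, z⟫
      = F xplus + L / 2 * ‖y - xplus‖ ^ 2 + L * ⟪y - xplus, z - y⟫ := by
    rw [hhbar, hgbar, norm_smul, real_inner_smul_left, real_inner_smul_left, inner_sub_right,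
      Real.norm_of_nonneg hL.le]
    field_simp
    ring
  rw [hnew]
  exact le_aggregate_of_lower_bounds hA ha.le hweight hyA hlow hold

/-- Theorem 7: estimate sequence feasibility preservation of the
Accelerated Gradient Method with Memory. If `L a² = A + a`, `ψ* ≥ F(x_k)` for the current
estimate function `ψ(x) = h + ⟨g, x⟩ + (1/(2A))‖x − x₀‖²` with minimizer `v`,
`y = (A x_k + a v)/(A + a)`, `x₊ = T_L(y)` with the descent condition at `y`,
`ḡ = L(y − x₊)` and `h̄ = F(x₊) + (1/(2L))‖ḡ‖² − ⟨ḡ, y⟩`, then the new estimate function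
`ψ̄(x) = (A(h + ⟨g, x⟩) + a(h̄ + ⟨ḡ, x⟩))/(A + a) + (1/(2(A+a)))‖x − x₀‖²` satisfies
`inf ψ̄ ≥ F(x₊)`. -/
theorem agmm_estimate_feasibility {n : ℕ}
    (f Ψ F : Euc n → ℝ) (f' : Euc n → Euc n)
    (hf : ConvexOn ℝ Set.univ f)
    (hf' : ∀ z, HasGradientAt f (f' z) z)
    (hΨ : ConvexOn ℝ Set.univ Ψ)
    (hΨlsc : LowerSemicontinuous Ψ)
    (hF : ∀ z, F z = f z + Ψ z)
    (A a L : ℝ) (hA : 0 < A) (ha : 0 < a) (hL : 0 < L)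
    (hweight : L * a ^ 2 = A + a)
    (x0 xk v : Euc n) (h : ℝ) (g : Euc n)
    (hv : ∀ z, h + ⟪g, v⟫ + 1 / (2 * A) * ‖v - x0‖ ^ 2
        ≤ h + ⟪g, z⟫ + 1 / (2 * A) * ‖z - x0‖ ^ 2)
    (hfeas : F xk ≤ h + ⟪g, v⟫ + 1 / (2 * A) * ‖v - x0‖ ^ 2)
    (y : Euc n) (hy : y = (A + a)⁻¹ • (A • xk + a • v))
    (xplus : Euc n)
    (hT : ∀ z, f y + ⟪f' y, xplus - y⟫ + L / 2 * ‖xplus - y‖ ^ 2 + Ψ xplus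
        ≤ f y + ⟪f' y, z - y⟫ + L / 2 * ‖z - y‖ ^ 2 + Ψ z)
    (hdesc : f xplus ≤ f y + ⟪f' y, xplus - y⟫ + L / 2 * ‖xplus - y‖ ^ 2)
    (gbar : Euc n) (hgbar : gbar = L • (y - xplus))
    (hbar : ℝ) (hhbar : hbar = F xplus + 1 / (2 * L) * ‖gbar‖ ^ 2 - ⟪gbar, y⟫) :
    ∀ z, F xplus ≤ (A * (h + ⟪g, z⟫) + a * (hbar + ⟪gbar, z⟫)) / (A + a)
        + 1 / (2 * (A + a)) * ‖z - x0‖ ^ 2 :=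
  agmm_estimate_feasibility_general f Ψ F f' hf hf' hΨ hF A a L hA ha hL hweight x0 xk v h g hv
    hfeas y hy xplus hT hdesc gbar hgbar hbar hhbar
end

section
/- Suppose Ψ has strong convexity parameter μ_Ψ ≥ 0 (f is only assumed convex). Let L > 0 and x ∈ ℝ^n, suppose the descent condition holds at x with constant L, and define g_L(x) = (L + μ_Ψ)(x − T_L(x)). Then for every y ∈ ℝ^n: F(y) ≥ F(T_L(x)) + (1/(2(L + μ_Ψ)))‖g_L(x)‖² + ⟨g_L(x), y − x⟩ + (μ_Ψ/2)‖y − x‖². -/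
open Set
open scoped RealInnerProductSpace

/-!
The model `φ y = f x + ⟪∇f x, y - x⟫ + L/2 ‖y - x‖² + Ψ y` is `(L + μ_Ψ)`-strongly convex and
minimised at `T`, so `φ T + (L + μ_Ψ)/2 ‖y - T‖² ≤ φ y`. Convexity of `f` bounds `φ y` by
`F y + L/2 ‖y - x‖²`, the descent condition bounds `φ T` below by `F T`, and expanding
`‖y - T‖²` around `x` turns the result into the claimed inequality.
-/

section NormedSpace

variable {E : Type*} [NormedAddCommGroup E] [NormedSpace ℝ E] {s : Set E} {f : E → ℝ} {x y : E}

theorem ConvexOn.apply_add_le_of_hasFDerivAt {f' : E →L[ℝ] ℝ} (hf : ConvexOn ℝ s f)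
    (hx : x ∈ s) (hy : y ∈ s) (hf' : HasFDerivAt f f' x) : f x + f' (y - x) ≤ f y := by
  have hline := hf.comp_affineMap (AffineMap.lineMap (k := ℝ) x y)
  have hderiv : HasDerivAt (f ∘ AffineMap.lineMap (k := ℝ) x y) (f' (y - x)) 0 :=
    (AffineMap.lineMap_apply_zero (k := ℝ) x y ▸ hf').comp_hasDerivAt 0
      AffineMap.hasDerivAt_lineMap
  have hslope := hline.le_slope_of_hasDerivAt (by simpa) (by simpa) zero_lt_one hderiv
  simp only [slope_def_field, Function.comp_apply, AffineMap.lineMap_apply_zero,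
    AffineMap.lineMap_apply_one, sub_zero, div_one] at hslope
  linarith

nonrec theorem StrongConvexOn.add {g : E → ℝ} {m n : ℝ} (hf : StrongConvexOn s m f)
    (hg : StrongConvexOn s n g) : StrongConvexOn s (m + n) (f + g) :=
  (hf.add hg).mono fun r ↦ le_of_eq (by simp only [Pi.add_apply]; ring)

theorem StrongConvexOn.apply_add_sq_norm_sub_le_of_isMinOn {m : ℝ} (hf : StrongConvexOn s m f)
    (hx : x ∈ s) (hy : y ∈ s) (hmin : IsMinOn f s x) : f x + m / 2 * ‖y - x‖ ^ 2 ≤ f y := by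
  have hseg : ∀ t ∈ Ioo (0 : ℝ) 1, f x + (1 - t) * (m / 2 * ‖y - x‖ ^ 2) ≤ f y := by
    intro t ⟨ht₀, ht₁⟩
    have hconv := hf.2 hx hy (sub_nonneg.2 ht₁.le) ht₀.le (sub_add_cancel 1 t)
    have hle := hmin (hf.1 hx hy (sub_nonneg.2 ht₁.le) ht₀.le (sub_add_cancel 1 t))
    rw [norm_sub_rev] at hconv
    simp only [smul_eq_mul, mem_ofPred_eq] at hconv hle
    have hscaled : t * (f x + (1 - t) * (m / 2 * ‖y - x‖ ^ 2) - f y) ≤ 0 := by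
      linear_combination hle + hconv
    exact sub_nonpos.1 (nonpos_of_mul_nonpos_right hscaled ht₀)
  have hclosed : IsClosed {t : ℝ | f x + (1 - t) * (m / 2 * ‖y - x‖ ^ 2) ≤ f y} :=
    isClosed_le (by fun_prop) continuous_const
  have hzero := hclosed.closure_subset_iff.2 hseg
    (by rw [closure_Ioo zero_ne_one]; exact left_mem_Icc.2 zero_le_one)
  simpa using hzero

end NormedSpace

section InnerProductSpace

variable {E : Type*} [NormedAddCommGroup E] [InnerProductSpace ℝ E] {s : Set E} {f : E → ℝ}
  {x y g : E}

theorem ConvexOn.apply_add_inner_le_of_hasGradientAt [CompleteSpace E] (hf : ConvexOn ℝ s f)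
    (hx : x ∈ s) (hy : y ∈ s) (hg : HasGradientAt f g x) : f x + ⟪g, y - x⟫ ≤ f y :=
  hf.apply_add_le_of_hasFDerivAt hx hy hg.hasFDerivAt

theorem strongConvexOn_univ_add_inner_add_sq_norm (c m : ℝ) (g x : E) :
    StrongConvexOn univ m (fun y ↦ c + ⟪g, y - x⟫ + m / 2 * ‖y - x‖ ^ 2) := by
  rw [strongConvexOn_iff_convex]
  have haffine : (fun y ↦ c + ⟪g, y - x⟫ + m / 2 * ‖y - x‖ ^ 2 - m / 2 * ‖y‖ ^ 2)
      = fun y ↦ innerSL ℝ (g - m • x) y + (c - ⟪g, x⟫ + m / 2 * ‖x‖ ^ 2) := by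
    ext y
    simp only [innerSL_apply_apply, inner_sub_left, inner_sub_right, real_inner_smul_right,
      norm_sub_sq_real, real_inner_comm]
    ring
  rw [haffine]
  exact ((innerSL ℝ (g - m • x)).toLinearMap.convexOn convex_univ).add_const _

end InnerProductSpace

theorem regularizer_sc_composite_lower_bound_general {n : ℕ}
    (f Ψ F : Euc n → ℝ) (f' : Euc n → Euc n)
    (hf : ConvexOn ℝ Set.univ f)
    (hf' : ∀ z, HasGradientAt f (f' z) z)
    (μΨ : ℝ)
    (hΨ : StrongConvexOn Set.univ μΨ Ψ)
    (hF : ∀ z, F z = f z + Ψ z)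
    (L : ℝ) (x T : Euc n)
    (hT : ∀ y, f x + ⟪f' x, T - x⟫ + L / 2 * ‖T - x‖ ^ 2 + Ψ T
        ≤ f x + ⟪f' x, y - x⟫ + L / 2 * ‖y - x‖ ^ 2 + Ψ y)
    (hdesc : f T ≤ f x + ⟪f' x, T - x⟫ + L / 2 * ‖T - x‖ ^ 2) :
    ∀ y, F y ≥ F T + 1 / (2 * (L + μΨ)) * ‖(L + μΨ) • (x - T)‖ ^ 2
        + ⟪(L + μΨ) • (x - T), y - x⟫ + μΨ / 2 * ‖y - x‖ ^ 2 := by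
  intro y
  have hmodel := (strongConvexOn_univ_add_inner_add_sq_norm (f x) L (f' x) x).add hΨ
  have hgrowth := hmodel.apply_add_sq_norm_sub_le_of_isMinOn (mem_univ T) (mem_univ y)
    fun z _ ↦ hT z
  simp only [Pi.add_apply] at hgrowth
  have hgrad := hf.apply_add_inner_le_of_hasGradientAt (mem_univ x) (mem_univ y) (hf' x)
  have hsplit : ‖y - T‖ ^ 2 = ‖y - x‖ ^ 2 + 2 * ⟪x - T, y - x⟫ + ‖T - x‖ ^ 2 := by
    rw [← sub_add_sub_cancel y x T, norm_add_sq_real, real_inner_comm, norm_sub_rev T]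
  have hcoef : 1 / (2 * (L + μΨ)) * ‖(L + μΨ) • (x - T)‖ ^ 2 = (L + μΨ) / 2 * ‖T - x‖ ^ 2 := by
    rw [norm_smul, mul_pow, Real.norm_eq_abs, sq_abs, norm_sub_rev]
    -- when `L + μΨ = 0` both sides vanish, the left one through `1 / 0 = 0`
    rcases eq_or_ne (L + μΨ) 0 with h | h
    · simp [h]
    · field_simp
  rw [ge_iff_le, hF, hF, hcoef, real_inner_smul_left]
  linear_combination hgrowth + hgrad + hdesc - (L + μΨ) / 2 * hsplit

/-- Lemma 9: if only `Ψ` has a strong convexity parameter `μ_Ψ ≥ 0`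
(`f` merely convex), the descent condition holds at `x` with constant `L > 0`, and
`g_L(x) = (L + μ_Ψ)(x − T_L(x))`, then for every `y`:
`F(y) ≥ F(T_L(x)) + (1/(2(L+μ_Ψ)))‖g_L(x)‖² + ⟨g_L(x), y − x⟩ + (μ_Ψ/2)‖y − x‖²`. -/
theorem regularizer_sc_composite_lower_bound {n : ℕ}
    (f Ψ F : Euc n → ℝ) (f' : Euc n → Euc n)
    (hf : ConvexOn ℝ Set.univ f)
    (hf' : ∀ z, HasGradientAt f (f' z) z)
    (μΨ : ℝ) (hμΨ : 0 ≤ μΨ)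
    (hΨ : StrongConvexOn Set.univ μΨ Ψ)
    (hΨlsc : LowerSemicontinuous Ψ)
    (hF : ∀ z, F z = f z + Ψ z)
    (L : ℝ) (hL : 0 < L) (x T : Euc n)
    (hT : ∀ y, f x + ⟪f' x, T - x⟫ + L / 2 * ‖T - x‖ ^ 2 + Ψ T
        ≤ f x + ⟪f' x, y - x⟫ + L / 2 * ‖y - x‖ ^ 2 + Ψ y)
    (hdesc : f T ≤ f x + ⟪f' x, T - x⟫ + L / 2 * ‖T - x‖ ^ 2) :
    ∀ y, F y ≥ F T + 1 / (2 * (L + μΨ)) * ‖(L + μΨ) • (x - T)‖ ^ 2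
        + ⟪(L + μΨ) • (x - T), y - x⟫ + μΨ / 2 * ‖y - x‖ ^ 2 :=
  regularizer_sc_composite_lower_bound_general f Ψ F f' hf hf' μΨ hΨ hF L x T hT hdesc
end

section
/- Let H ∈ ℝ^p, let G be an n×p real matrix with columns g_1, …, g_p, let x̄ ∈ ℝ^n and a > 0. Then the function u(y) = max_{1≤i≤p} {(H)_i + ⟨g_i, y⟩} + (1/(2a))‖y − x̄‖² attains its minimum over ℝ^n, strong duality holds: min_{y ∈ ℝ^n} u(y) = max_{λ ∈ Δ_p} [⟨λ, H⟩ + ⟨G λ, x̄⟩ − (a/2)‖G λ‖²], and if λ* attains the maximum on the right-hand side then y* = x̄ − a G λ* attains the minimum on the left-hand side. -/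
/-!
The Lagrangian `L(λ, y) = ∑ λᵢ (Hᵢ + ⟪gᵢ, y⟫) + ‖y - x̄‖² / (2a)` sits below the primal objective
for every `λ` in the simplex (a weighted average is at most the maximum), and completing the square
in `y` shows it sits above the dual objective, with equality exactly at `y = x̄ - a G λ`. This gives
weak duality. At a maximizer `λ*` of the concave quadratic dual objective, the first-order condition
along the edges `λ* → eₖ` of the simplex says that no affine piece exceeds their `λ*`-average at
`y* = x̄ - a G λ*`, so there the maximum equals the average and the primal value equals the dual one.
-/

open Set
open scoped RealInnerProductSpace

open Filter Topology

lemma nonpos_of_forall_mul_le_mul_sq {c K : ℝ} (h : ∀ t : ℝ, 0 < t → t ≤ 1 → c * t ≤ K * t ^ 2) :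
    c ≤ 0 := by
  have hlim : Tendsto (fun t => K * t) (𝓝[>] 0) (𝓝 0) := by
    simpa using ((continuous_const_mul K).tendsto 0).mono_left nhdsWithin_le_nhds
  refine ge_of_tendsto hlim ?_
  filter_upwards [Ioc_mem_nhdsGT one_pos] with t ht
  refine le_of_mul_le_mul_right ?_ ht.1
  simpa [sq, mul_assoc] using h t ht.1 ht.2

lemma sum_mul_le_ciSup {ι : Type*} [Fintype ι] {l : ι → ℝ} (hl : l ∈ stdSimplex ℝ ι)
    (f : ι → ℝ) : ∑ i, l i * f i ≤ ⨆ i, f i :=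
  calc ∑ i, l i * f i ≤ ∑ i, l i * ⨆ j, f j := Finset.sum_le_sum fun i _ =>
        mul_le_mul_of_nonneg_left (le_ciSup (Set.finite_range f).bddAbove i) (hl.1 i)
    _ = ⨆ j, f j := by rw [← Finset.sum_mul, hl.2, one_mul]

lemma inner_add_norm_sub_sq_eq {E : Type*} [NormedAddCommGroup E] [InnerProductSpace ℝ E]
    {a : ℝ} (ha : a ≠ 0) (s xbar y : E) :
    ⟪s, y⟫ + 1 / (2 * a) * ‖y - xbar‖ ^ 2
      = ⟪s, xbar⟫ - a / 2 * ‖s‖ ^ 2 + 1 / (2 * a) * ‖y - (xbar - a • s)‖ ^ 2 := by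
  rw [show y - (xbar - a • s) = (y - xbar) + a • s by abel, norm_add_sq_real, norm_smul,
    real_inner_smul_right, inner_sub_left, real_inner_comm y s, real_inner_comm xbar s,
    Real.norm_eq_abs, mul_pow, sq_abs]
  field_simp
  ring

lemma sum_mul_add_inner {ι E : Type*} [Fintype ι] [NormedAddCommGroup E]
    [InnerProductSpace ℝ E] (H : ι → ℝ) (g : ι → E) (l : ι → ℝ) (y : E) :
    ∑ i, l i * (H i + ⟪g i, y⟫) = ∑ i, l i * H i + ⟪∑ i, l i • g i, y⟫ := by
  simp only [mul_add, Finset.sum_add_distrib, sum_inner, real_inner_smul_left]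

namespace InnerProblem

variable {ι E : Type*} [Fintype ι] [NormedAddCommGroup E] [InnerProductSpace ℝ E]
  (H : ι → ℝ) (g : ι → E) (xbar : E) (a : ℝ)

noncomputable section

def primalObj (y : E) : ℝ := (⨆ i, (H i + ⟪g i, y⟫)) + 1 / (2 * a) * ‖y - xbar‖ ^ 2

def dualObj (l : ι → ℝ) : ℝ :=
  (∑ i, l i * H i) + ⟪∑ i, l i • g i, xbar⟫ - a / 2 * ‖∑ i, l i • g i‖ ^ 2

def lagrangian (l : ι → ℝ) (y : E) : ℝ :=
  ∑ i, l i * (H i + ⟪g i, y⟫) + 1 / (2 * a) * ‖y - xbar‖ ^ 2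

end

lemma exists_isMaxOn_dualObj [Nonempty ι] :
    ∃ l ∈ stdSimplex ℝ ι, IsMaxOn (dualObj H g xbar a) (stdSimplex ℝ ι) l :=
  (isCompact_stdSimplex ℝ ι).exists_isMaxOn (nonempty_coe_sort.mp inferInstance)
    (by unfold dualObj; fun_prop)

variable {H g xbar a}

lemma lagrangian_le_primalObj {l : ι → ℝ} (hl : l ∈ stdSimplex ℝ ι) (y : E) :
    lagrangian H g xbar a l y ≤ primalObj H g xbar a y :=
  add_le_add_left (sum_mul_le_ciSup hl _) _

lemma lagrangian_eq_dualObj_add (ha : a ≠ 0) (l : ι → ℝ) (y : E) :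
    lagrangian H g xbar a l y
      = dualObj H g xbar a l + 1 / (2 * a) * ‖y - (xbar - a • ∑ i, l i • g i)‖ ^ 2 := by
  rw [lagrangian, dualObj, sum_mul_add_inner, add_assoc, inner_add_norm_sub_sq_eq ha]
  ring

lemma dualObj_le_lagrangian (ha : 0 < a) (l : ι → ℝ) (y : E) :
    dualObj H g xbar a l ≤ lagrangian H g xbar a l y := by
  rw [lagrangian_eq_dualObj_add ha.ne']
  exact le_add_of_nonneg_right (by positivity)

lemma lagrangian_sub_smul_eq_dualObj (ha : a ≠ 0) (l : ι → ℝ) :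
    lagrangian H g xbar a l (xbar - a • ∑ i, l i • g i) = dualObj H g xbar a l := by
  simp [lagrangian_eq_dualObj_add ha]

lemma dualObj_le_primalObj (ha : 0 < a) {l : ι → ℝ} (hl : l ∈ stdSimplex ℝ ι) (y : E) :
    dualObj H g xbar a l ≤ primalObj H g xbar a y :=
  (dualObj_le_lagrangian ha l y).trans (lagrangian_le_primalObj hl y)

lemma dualObj_add_smul (l v : ι → ℝ) (t : ℝ) :
    dualObj H g xbar a (l + t • v) = dualObj H g xbar a l
      + t * ∑ i, v i * (H i + ⟪g i, xbar - a • ∑ j, l j • g j⟫)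
      - a / 2 * ‖∑ i, v i • g i‖ ^ 2 * t ^ 2 := by
  have hG : ∑ i, (l + t • v) i • g i = ∑ i, l i • g i + t • ∑ i, v i • g i := by
    simp only [Pi.add_apply, Pi.smul_apply, smul_eq_mul, add_smul, mul_smul,
      Finset.sum_add_distrib, Finset.smul_sum]
  have hH : ∑ i, (l + t • v) i * H i = ∑ i, l i * H i + t * ∑ i, v i * H i := by
    simp only [Pi.add_apply, Pi.smul_apply, smul_eq_mul, add_mul, mul_assoc,
      Finset.sum_add_distrib, Finset.mul_sum]
  rw [dualObj, dualObj, hG, hH, sum_mul_add_inner, norm_add_sq_real, norm_smul, inner_add_left,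
    inner_sub_right, real_inner_smul_left, real_inner_smul_right, real_inner_smul_right,
    real_inner_comm (∑ i, l i • g i), Real.norm_eq_abs, mul_pow, sq_abs]
  ring

lemma le_sum_mul_of_isMaxOn_dualObj {l : ι → ℝ} (hl : l ∈ stdSimplex ℝ ι)
    (hmax : IsMaxOn (dualObj H g xbar a) (stdSimplex ℝ ι) l) (k : ι) :
    H k + ⟪g k, xbar - a • ∑ j, l j • g j⟫
      ≤ ∑ i, l i * (H i + ⟪g i, xbar - a • ∑ j, l j • g j⟫) := by
  classical
  set φ : ι → ℝ := fun i => H i + ⟪g i, xbar - a • ∑ j, l j • g j⟫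
  set v : ι → ℝ := Pi.single k 1 - l
  have hslope : ∑ i, v i * φ i = φ k - ∑ i, l i * φ i := by
    simp [v, sub_mul, Finset.sum_sub_distrib, Pi.single_apply]
  suffices ∑ i, v i * φ i ≤ 0 by linarith
  refine nonpos_of_forall_mul_le_mul_sq (K := a / 2 * ‖∑ i, v i • g i‖ ^ 2) fun t ht0 ht1 => ?_
  have hmem : l + t • v ∈ stdSimplex ℝ ι :=
    convex_stdSimplex ℝ ι |>.add_smul_sub_mem hl (single_mem_stdSimplex ℝ k) ⟨ht0.le, ht1⟩
  have hle := isMaxOn_iff.mp hmax _ hmem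
  rw [dualObj_add_smul] at hle
  linarith

lemma primalObj_eq_dualObj_of_isMaxOn [Nonempty ι] (ha : a ≠ 0) {l : ι → ℝ}
    (hl : l ∈ stdSimplex ℝ ι) (hmax : IsMaxOn (dualObj H g xbar a) (stdSimplex ℝ ι) l) :
    primalObj H g xbar a (xbar - a • ∑ i, l i • g i) = dualObj H g xbar a l := by
  rw [← lagrangian_sub_smul_eq_dualObj ha, primalObj, lagrangian,
    le_antisymm (ciSup_le (le_sum_mul_of_isMaxOn_dualObj hl hmax)) (sum_mul_le_ciSup hl _)]

lemma isMinOn_primalObj_of_isMaxOn [Nonempty ι] (ha : 0 < a) {l : ι → ℝ}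
    (hl : l ∈ stdSimplex ℝ ι) (hmax : IsMaxOn (dualObj H g xbar a) (stdSimplex ℝ ι) l) :
    IsMinOn (primalObj H g xbar a) univ (xbar - a • ∑ i, l i • g i) :=
  isMinOn_univ_iff.mpr fun y =>
    primalObj_eq_dualObj_of_isMaxOn ha.ne' hl hmax ▸ dualObj_le_primalObj ha hl y

end InnerProblem

open InnerProblem

/-- strong duality for the inner problem: the regularized piecewise-linear
model `u(y) = max_i {(H)_i + ⟨g_i, y⟩} + (1/(2a))‖y − x̄‖²` attains its minimum over `ℝ^n`,
the anti-dual QP `d(λ) = ⟨λ, H⟩ + ⟨Gλ, x̄⟩ − (a/2)‖Gλ‖²` attains its maximum over the simplex,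
and for any maximizer `λ*` of `d` on `Δ_p`, the point `y* = x̄ − a G λ*` attains the minimum of
`u` and `u(y*) = d(λ*)` (i.e. `min u = max d`). -/
theorem inner_problem_strong_duality {n p : ℕ} [Nonempty (Fin p)]
    (H : Fin p → ℝ) (g : Fin p → Euc n) (xbar : Euc n) (a : ℝ) (ha : 0 < a) :
    (∃ ystar : Euc n,
        IsMinOn (fun y : Euc n => (⨆ i, (H i + ⟪g i, y⟫)) + 1 / (2 * a) * ‖y - xbar‖ ^ 2)
          Set.univ ystar)
    ∧ (∃ lam ∈ stdSimplex ℝ (Fin p),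
        IsMaxOn
          (fun l : Fin p → ℝ =>
            (∑ i, l i * H i) + ⟪∑ i, l i • g i, xbar⟫ - a / 2 * ‖∑ i, l i • g i‖ ^ 2)
          (stdSimplex ℝ (Fin p)) lam)
    ∧ ∀ lam ∈ stdSimplex ℝ (Fin p),
        IsMaxOn
          (fun l : Fin p → ℝ =>
            (∑ i, l i * H i) + ⟪∑ i, l i • g i, xbar⟫ - a / 2 * ‖∑ i, l i • g i‖ ^ 2)
          (stdSimplex ℝ (Fin p)) lam →
        ((⨆ i, (H i + ⟪g i, xbar - a • ∑ j, lam j • g j⟫))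
            + 1 / (2 * a) * ‖(xbar - a • ∑ j, lam j • g j) - xbar‖ ^ 2
          = (∑ i, lam i * H i) + ⟪∑ i, lam i • g i, xbar⟫ - a / 2 * ‖∑ i, lam i • g i‖ ^ 2)
        ∧ IsMinOn (fun y : Euc n => (⨆ i, (H i + ⟪g i, y⟫)) + 1 / (2 * a) * ‖y - xbar‖ ^ 2)
            Set.univ (xbar - a • ∑ j, lam j • g j) := by
  obtain ⟨lam₀, hlam₀, hmax₀⟩ := exists_isMaxOn_dualObj H g xbar a
  exact ⟨⟨_, isMinOn_primalObj_of_isMaxOn ha hlam₀ hmax₀⟩, ⟨lam₀, hlam₀, hmax₀⟩,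
    fun lam hlam hmax => ⟨primalObj_eq_dualObj_of_isMaxOn ha.ne' hlam hmax,
      isMinOn_primalObj_of_isMaxOn ha hlam hmax⟩⟩
end

section
/- Suppose F has quadratic functional growth with parameter μ > 0. Let x₀ ∈ ℝ^n with F(x₀) < +∞, let x_k ∈ ℝ^n and A > 0 satisfy F(x_k) − F* ≤ ‖x₀ − o(x₀)‖² / (2A) and μA > 1. Then F(x_k) − F(x) ≤ F(x_k) − F* ≤ (F(x₀) − F(x_k)) / (μA − 1) for every x ∈ ℝ^n. -/
open Set
open scoped RealInnerProductSpace

/-- computable accuracy bound under QFG, cf. Lemma 11: if `F` has quadratic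
functional growth with parameter `μ > 0`, `F(x_k) − F* ≤ ‖x₀ − o(x₀)‖²/(2A)` and `μA > 1`,
then `F(x_k) − F(x) ≤ F(x_k) − F* ≤ (F(x₀) − F(x_k))/(μA − 1)` for every `x`. -/
theorem qfg_known_accuracy_bound {n : ℕ}
    (f Ψ F : Euc n → ℝ)
    (hf : ConvexOn ℝ Set.univ f) (hfd : Differentiable ℝ f)
    (hΨ : ConvexOn ℝ Set.univ Ψ) (hΨlsc : LowerSemicontinuous Ψ)
    (hF : ∀ z, F z = f z + Ψ z)
    (Fstar : ℝ) (Xstar : Set (Euc n))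
    (hXstar : Xstar = {z | ∀ y, F z ≤ F y}) (hXne : Xstar.Nonempty)
    (hFstar : ∀ z ∈ Xstar, F z = Fstar)
    (o : Euc n → Euc n)
    (ho : ∀ z, o z ∈ Xstar ∧ ∀ w ∈ Xstar, ‖z - o z‖ ≤ ‖z - w‖)
    (μ : ℝ) (hμ : 0 < μ)
    (hQFG : ∀ z, Fstar + μ / 2 * ‖z - o z‖ ^ 2 ≤ F z)
    (x0 xk : Euc n) (A : ℝ) (hA : 0 < A)
    (hguar : F xk - Fstar ≤ ‖x0 - o x0‖ ^ 2 / (2 * A))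
    (hμA : 1 < μ * A) :
    (∀ x : Euc n, F xk - F x ≤ F xk - Fstar)
    ∧ F xk - Fstar ≤ (F x0 - F xk) / (μ * A - 1) := by
  have hFstar_le : ∀ x, Fstar ≤ F x := by
    intro x
    have h1 := (ho x).1
    rw [hXstar] at h1
    have := h1 x
    rw [hFstar (o x) ((ho x).1)] at this
    exact this
  constructor
  · intro x
    have := hFstar_le x
    linarith
  · have h0 := hQFG x0
    have hμApos : 0 < μ * A - 1 := by linarith
    have hk : (F xk - Fstar) * (μ * A) ≤ F x0 - Fstar := by
      have h3 : (F xk - Fstar) * (2 * A) ≤ ‖x0 - o x0‖ ^ 2 := by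
        rw [← le_div_iff₀ (by positivity)]; exact hguar
      nlinarith
    rw [le_div_iff₀ hμApos]
    nlinarith
end

section
/- Let s > 1, p > 0, U₁ > 0, c > 0, μ > 0, D > 0, and let b be a positive integer with s^b ≤ s/(μ D U₁). Then Σ_{i=0}^{b−1} (s^i U₁ / c)^{1/p} ≤ (U₁/c)^{1/p} (r_U + (r_U − 1) s̄), where r_U = (μ D U₁)^{−1/p} and s̄ = 1/(s^{1/p} − 1). -/
open Set Finset

/-- backtracking overhead bound: for `s > 1`, `p > 0`, `U₁, c, μ, D > 0`
and a positive integer `b` with `s^b ≤ s/(μ D U₁)`, the total backtracking cost satisfies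
`Σ_{i=0}^{b−1} (s^i U₁/c)^{1/p} ≤ (U₁/c)^{1/p} (r_U + (r_U − 1) s̄)` where
`r_U = (μ D U₁)^{−1/p}` and `s̄ = 1/(s^{1/p} − 1)`. -/
theorem backtracking_iteration_bound (s p U₁ c μ D : ℝ)
    (hs : 1 < s) (hp : 0 < p) (hU : 0 < U₁) (hc : 0 < c) (hμ : 0 < μ) (hD : 0 < D)
    (b : ℕ) (hb : 0 < b) (hsb : s ^ b ≤ s / (μ * D * U₁)) :
    ∑ i ∈ Finset.range b, ((s ^ i * U₁) / c) ^ (1 / p)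
      ≤ (U₁ / c) ^ (1 / p)
        * ((μ * D * U₁) ^ (-(1 / p))
            + ((μ * D * U₁) ^ (-(1 / p)) - 1) * (1 / (s ^ (1 / p) - 1))) := by
  have hq : 0 < 1 / p := by positivity
  have hs0 : (0:ℝ) < s := lt_trans one_pos hs
  have hm : (0:ℝ) < μ * D * U₁ := by positivity
  set q : ℝ := 1 / p with hqdef
  set t : ℝ := s ^ q with htdef
  set r : ℝ := (μ * D * U₁) ^ (-q) with hrdef
  have ht1 : 1 < t := Real.one_lt_rpow_iff_of_pos hs0 |>.2 (Or.inl ⟨hs, hq⟩)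
  have ht0 : 0 < t - 1 := by linarith
  -- each term
  have hterm : ∀ i, ((s ^ i * U₁) / c) ^ q = (U₁ / c) ^ q * t ^ i := by
    intro i
    have h1 : (s ^ i * U₁) / c = (s ^ i) * (U₁ / c) := by ring
    rw [h1, Real.mul_rpow (by positivity) (by positivity), mul_comm]
    congr 1
    rw [← Real.rpow_natCast s i, ← Real.rpow_mul hs0.le, mul_comm,
      Real.rpow_mul hs0.le, Real.rpow_natCast]
  have hsum : ∑ i ∈ Finset.range b, ((s ^ i * U₁) / c) ^ q
      = (U₁ / c) ^ q * ((t ^ b - 1) / (t - 1)) := by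
    simp only [hterm, ← Finset.mul_sum]
    rw [geom_sum_eq (ne_of_gt ht1)]
  rw [hsum]
  apply mul_le_mul_of_nonneg_left _ (by positivity)
  -- key inequality: t ^ b ≤ r * t
  have hkey : t ^ b ≤ r * t := by
    have h2 : ((s:ℝ) ^ b) ^ q ≤ (s / (μ * D * U₁)) ^ q :=
      Real.rpow_le_rpow (by positivity) hsb hq.le
    have h3 : ((s:ℝ) ^ b) ^ q = t ^ b := by
      rw [← Real.rpow_natCast s b, ← Real.rpow_mul hs0.le, mul_comm,
        Real.rpow_mul hs0.le, Real.rpow_natCast]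
    have h4 : (s / (μ * D * U₁)) ^ q = r * t := by
      rw [Real.div_rpow hs0.le hm.le, hrdef, Real.rpow_neg hm.le, div_eq_mul_inv, mul_comm]
    rw [h3, h4] at h2
    exact h2
  have hrhs : r + (r - 1) * (1 / (t - 1)) = (r * t - 1) / (t - 1) := by
    field_simp
    ring
  rw [hrhs]
  exact (div_le_div_iff_of_pos_right ht0).mpr (by linarith)
end
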